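/- arXiv:1905.02575 — 6 statements merged into one kernel-verified Lean document; each statement's English description precedes it below -/
import Mathlib

section
/- Let $g_j : [0, \eta) \to \mathbb{R}$ (for $j$ in a finite index set) be functions that are smooth on $[0,\eta)$ (with one-sided derivatives at $0$), and suppose there exist $a \in \mathbb{R}$ and $k \in \mathbb{N}$ such that $a t^{2k} = \sum_j g_j(t)^2$ for all $t \in [0,\eta)$. Then $a = \sum_j \left(\frac{g_j^{(k)}(0)}{k!}\right)^2$. -/
open Set Filter Topology

private lemma taylor_bound_aux {f : ℝ → ℝ} {η : ℝ} (hη : 0 < η)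
    (hf : ContDiffOn ℝ (⊤ : ℕ∞) f (Set.Ico 0 η)) (n : ℕ) :
    ∃ C : ℝ, ∀ t ∈ Set.Ioo (0:ℝ) (η/2),
      |f t - ∑ i ∈ Finset.range (n+1),
        iteratedDerivWithin i f (Set.Ico 0 η) 0 / (Nat.factorial i) * t ^ i| ≤ C * t ^ (n+1) := by
  have hb : (0:ℝ) < η/2 := by linarith
  have hsub : Set.Icc (0:ℝ) (η/2) ⊆ Set.Ico 0 η := fun x hx => ⟨hx.1, by
    have := hx.2; simp only [Set.mem_Icc] at *; linarith⟩
  have hset : Set.Icc (0:ℝ) (η/2) =ᶠ[𝓝 (0:ℝ)] Set.Ico 0 η := by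
    rw [Filter.eventuallyEq_set]
    filter_upwards [Ioo_mem_nhds (by linarith : -(η/2) < (0:ℝ)) hb] with x hx
    simp only [Set.mem_Icc, Set.mem_Ico, Set.mem_Ioo] at *
    constructor
    · rintro ⟨h1, h2⟩; exact ⟨h1, by linarith⟩
    · rintro ⟨h1, h2⟩; exact ⟨h1, hx.2.le⟩
  have hderiv : ∀ i, iteratedDerivWithin i f (Set.Icc 0 (η/2)) 0
      = iteratedDerivWithin i f (Set.Ico 0 η) 0 := fun i => by
    simp only [iteratedDerivWithin_eq_iteratedFDerivWithin,
      iteratedFDerivWithin_congr_set hset i]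
  obtain ⟨C, hC⟩ := exists_taylor_mean_remainder_bound (n := n) (le_of_lt hb)
    ((hf.mono hsub).of_le (by exact_mod_cast le_top))
  refine ⟨C, fun t ht => ?_⟩
  have h1 := hC t ⟨ht.1.le, ht.2.le⟩
  rw [taylor_within_apply] at h1
  simp only [sub_zero] at h1
  have heq : ∑ i ∈ Finset.range (n+1),
      ((Nat.factorial i : ℝ)⁻¹ * t ^ i) • iteratedDerivWithin i f (Set.Icc 0 (η/2)) 0
      = ∑ i ∈ Finset.range (n+1),
      iteratedDerivWithin i f (Set.Ico 0 η) 0 / (Nat.factorial i) * t ^ i := by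
    refine Finset.sum_congr rfl fun i _ => ?_
    rw [hderiv i, smul_eq_mul]; ring
  rw [heq] at h1
  simpa [Real.norm_eq_abs] using h1

set_option maxHeartbeats 1000000 in
/-- Proposition: Taylor coefficient identity for sums of squares.
If `g j : [0,η) → ℝ` are smooth on `[0,η)` (one-sided at `0`) and
`a * t^(2k) = ∑ j, g j t ^ 2` on `[0,η)`, then
`a = ∑ j, (g_j^{(k)}(0) / k!)^2`. -/
theorem stmt_0 {J : Type*} [Fintype J] (η : ℝ) (hη : 0 < η)
    (g : J → ℝ → ℝ) (hg : ∀ j, ContDiffOn ℝ (⊤ : ℕ∞) (g j) (Set.Ico 0 η))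
    (a : ℝ) (k : ℕ)
    (h : ∀ t ∈ Set.Ico (0:ℝ) η, a * t ^ (2 * k) = ∑ j, g j t ^ 2) :
    a = ∑ j, (iteratedDerivWithin k (g j) (Set.Ico 0 η) 0 / (Nat.factorial k)) ^ 2 := by
  classical
  have hb : (0:ℝ) < η/2 := by linarith
  set c : J → ℕ → ℝ := fun j i => iteratedDerivWithin i (g j) (Set.Ico 0 η) 0 with hc
  have hsq : ∀ j, ∀ t ∈ Set.Ico (0:ℝ) η, g j t ^ 2 ≤ a * t ^ (2*k) := by
    intro j t ht
    rw [h t ht]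
    exact Finset.single_le_sum (f := fun i => g i t ^ 2) (fun i _ => sq_nonneg _)
      (Finset.mem_univ j)
  -- Step 1: derivatives of order < k vanish at 0
  have hzero : ∀ j, ∀ i, i < k → c j i = 0 := by
    intro j i
    induction i using Nat.strong_induction_on with
    | _ i IH =>
      intro hik
      obtain ⟨C, hC⟩ := taylor_bound_aux hη (hg j) i
      have hsum : ∀ t : ℝ, ∑ m ∈ Finset.range (i+1), c j m / (Nat.factorial m) * t ^ m
          = c j i / (Nat.factorial i) * t ^ i := by
        intro t
        rw [Finset.sum_range_succ]
        have hz : ∑ m ∈ Finset.range i, c j m / (Nat.factorial m) * t ^ m = 0 := by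
          apply Finset.sum_eq_zero
          intro m hm
          rw [IH m (Finset.mem_range.1 hm) (lt_trans (Finset.mem_range.1 hm) hik)]
          ring
        rw [hz, zero_add]
      have key : ∀ t ∈ Set.Ioo (0:ℝ) (η/2),
          (c j i / (Nat.factorial i))^2 ≤ 2*a*t^(2*(k-i)) + 2*C^2*t^2 := by
        intro t ht
        have h1 := hC t ht
        rw [hsum] at h1
        have ht0 : (0:ℝ) < t := ht.1
        have htη : t ∈ Set.Ico (0:ℝ) η := ⟨ht.1.le, by
          have := ht.2; linarith⟩
        have h2 := hsq j t htη
        set P := c j i / (Nat.factorial i : ℝ) * t ^ i with hP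
        have hd : (g j t - P)^2 ≤ (C * t^(i+1))^2 := by
          have := pow_le_pow_left₀ (abs_nonneg (g j t - P)) h1 2
          rwa [sq_abs] at this
        have hP2 : P^2 ≤ 2 * (g j t)^2 + 2 * (g j t - P)^2 := by
          nlinarith [sq_nonneg (2 * g j t - P)]
        have e1 : t ^ (2*k) = t^(2*(k-i)) * t^(2*i) := by
          rw [← pow_add]; congr 1; omega
        have e2 : (C * t ^ (i+1))^2 = C^2 * (t^2 * t^(2*i)) := by
          rw [mul_pow, ← pow_mul, ← pow_add]; congr 2; omega
        have e3 : P^2 = (c j i / (Nat.factorial i))^2 * t^(2*i) := by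
          rw [hP, mul_pow, ← pow_mul]; congr 2; omega
        have hfin : (c j i / (Nat.factorial i))^2 * t^(2*i)
            ≤ (2*a*t^(2*(k-i)) + 2*C^2*t^2) * t^(2*i) := by
          rw [← e3]
          calc P^2 ≤ 2 * (g j t)^2 + 2 * (g j t - P)^2 := hP2
            _ ≤ 2 * (a * t^(2*k)) + 2 * (C * t^(i+1))^2 := by nlinarith
            _ = (2*a*t^(2*(k-i)) + 2*C^2*t^2) * t^(2*i) := by rw [e1, e2]; ring
        exact le_of_mul_le_mul_right hfin (pow_pos ht0 (2*i))
      have hlim : Tendsto (fun t : ℝ => 2*a*t^(2*(k-i)) + 2*C^2*t^2)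
          (𝓝[>] (0:ℝ)) (𝓝 0) := by
        have hcont : Continuous fun t : ℝ => 2*a*t^(2*(k-i)) + 2*C^2*t^2 := by continuity
        have := (hcont.tendsto 0).mono_left (nhdsWithin_le_nhds (s := Set.Ioi (0:ℝ)))
        simpa [zero_pow (show 2*(k-i) ≠ 0 by omega)] using this
      have hle : (c j i / (Nat.factorial i : ℝ))^2 ≤ 0 := by
        refine ge_of_tendsto hlim ?_
        filter_upwards [Ioo_mem_nhdsGT_of_mem ⟨le_refl (0:ℝ), hb⟩] with t ht
        exact key t ht
      have h5 : c j i / (Nat.factorial i : ℝ) = 0 := by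
        have := le_antisymm hle (sq_nonneg _)
        exact pow_eq_zero_iff (by norm_num : 2 ≠ 0) |>.1 this
      rcases div_eq_zero_iff.1 h5 with h6 | h6
      · exact h6
      · exact absurd h6 (Nat.cast_ne_zero.2 i.factorial_ne_zero)
  -- Step 2: g j t / t^k tends to c j k / k!
  have hmain : ∀ j, Tendsto (fun t => g j t / t^k) (𝓝[>] (0:ℝ))
      (𝓝 (c j k / (Nat.factorial k))) := by
    intro j
    obtain ⟨C, hC⟩ := taylor_bound_aux hη (hg j) k
    rw [← tendsto_sub_nhds_zero_iff]
    have hCt : Tendsto (fun t : ℝ => C * t) (𝓝[>] (0:ℝ)) (𝓝 0) := by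
      have hcont : Continuous fun t : ℝ => C * t := by continuity
      have := (hcont.tendsto 0).mono_left (nhdsWithin_le_nhds (s := Set.Ioi (0:ℝ)))
      simpa using this
    refine squeeze_zero_norm' ?_ hCt
    filter_upwards [Ioo_mem_nhdsGT_of_mem ⟨le_refl (0:ℝ), hb⟩] with t ht
    have h1 := hC t ht
    have hsum : ∑ m ∈ Finset.range (k+1), c j m / (Nat.factorial m) * t ^ m
        = c j k / (Nat.factorial k) * t ^ k := by
      rw [Finset.sum_range_succ]
      have hz : ∑ m ∈ Finset.range k, c j m / (Nat.factorial m) * t ^ m = 0 := by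
        apply Finset.sum_eq_zero
        intro m hm
        rw [hzero j m (Finset.mem_range.1 hm)]
        ring
      rw [hz, zero_add]
    rw [hsum] at h1
    have ht0 : (0:ℝ) < t := ht.1
    have htk : (0:ℝ) < t ^ k := pow_pos ht0 k
    rw [Real.norm_eq_abs]
    have heq : g j t / t^k - c j k / (Nat.factorial k)
        = (g j t - c j k / (Nat.factorial k) * t^k) / t^k := by
      field_simp
    rw [heq, abs_div, abs_of_pos htk, div_le_iff₀ htk]
    calc |g j t - c j k / (Nat.factorial k) * t^k| ≤ C * t^(k+1) := h1
      _ = C * t * t^k := by ring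
  have hlim2 : Tendsto (fun t => ∑ j, (g j t / t^k)^2) (𝓝[>] (0:ℝ))
      (𝓝 (∑ j, (c j k / (Nat.factorial k))^2)) :=
    tendsto_finset_sum _ (fun j _ => (hmain j).pow 2)
  have hconst : (fun t => ∑ j, (g j t / t^k)^2) =ᶠ[𝓝[>] (0:ℝ)] (fun _ => a) := by
    filter_upwards [Ioo_mem_nhdsGT_of_mem ⟨le_refl (0:ℝ), hb⟩] with t ht
    have ht0 : (0:ℝ) < t := ht.1
    have htη : t ∈ Set.Ico (0:ℝ) η := ⟨ht.1.le, by have := ht.2; linarith⟩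
    have h1 := h t htη
    have heq : ∑ j, (g j t / t^k)^2 = (∑ j, (g j t)^2) / t^(2*k) := by
      rw [Finset.sum_div]
      refine Finset.sum_congr rfl fun j _ => ?_
      rw [div_pow, ← pow_mul, Nat.mul_comm k 2]
    rw [heq, ← h1, mul_div_assoc, div_self (pow_ne_zero _ ht0.ne'), mul_one]
  exact tendsto_nhds_unique (Tendsto.congr' hconst.symm tendsto_const_nhds) hlim2
end

section
/- Let $g_j : [0, \eta) \to \mathbb{R}$ be smooth functions such that $a t^{2k} = \sum_j g_j(t)^2$ for all $t \in [0,\eta)$ for some $a \in \mathbb{R}$. Then $g_j(0) = g_j'(0) = \cdots = g_j^{(k-1)}(0) = 0$ for every $j$. -/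
open Nat (factorial)
local notation:10000 n "!" => Nat.factorial n

lemma iteratedDerivWithin_congr_set' {f : ℝ → ℝ} {s t : Set ℝ} {x : ℝ} (n : ℕ)
    (h : s =ᶠ[nhds x] t) :
    iteratedDerivWithin n f s x = iteratedDerivWithin n f t x := by
  simp only [iteratedDerivWithin, iteratedFDerivWithin_congr_set h]

/-- If `g j : [0,η) → ℝ` are smooth on `[0,η)` and
`a * t^(2k) = ∑ j, g j t ^ 2` on `[0,η)` with `k ≥ 1`, then all one-sided derivatives of `g j`
at `0` of order `< k` vanish (including the value `g j 0`). -/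
theorem stmt_1 {J : Type*} [Fintype J] (η : ℝ) (hη : 0 < η)
    (g : J → ℝ → ℝ) (hg : ∀ j, ContDiffOn ℝ (⊤ : ℕ∞) (g j) (Set.Ico 0 η))
    (a : ℝ) (k : ℕ) (hk : 1 ≤ k)
    (h : ∀ t ∈ Set.Ico (0:ℝ) η, a * t ^ (2 * k) = ∑ j, g j t ^ 2) :
    ∀ j, ∀ i < k, iteratedDerivWithin i (g j) (Set.Ico 0 η) 0 = 0 := by
  intro j
  set S := Set.Ico (0:ℝ) η with hS
  set b := η / 2 with hb
  have hb0 : 0 < b := by positivity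
  have hbη : b < η := by simp [hb]; linarith
  set S' := Set.Icc (0:ℝ) b with hS'
  have hS'S : S' ⊆ S := fun y hy => ⟨hy.1, lt_of_le_of_lt hy.2 hbη⟩
  -- a is nonnegative
  have ha : 0 ≤ a := by
    have h1 := h b ⟨hb0.le, hbη⟩
    have h2 : (0:ℝ) ≤ ∑ j', g j' b ^ 2 := Finset.sum_nonneg fun j' _ => sq_nonneg _
    nlinarith [pow_pos hb0 (2 * k)]
  -- pointwise bound |g j x| ≤ √a * x^k on S
  have hbound : ∀ x ∈ S, |g j x| ≤ Real.sqrt a * x ^ k := by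
    intro x hx
    have h1 : g j x ^ 2 ≤ a * x ^ (2 * k) := by
      rw [h x hx]
      exact Finset.single_le_sum (fun j' _ => sq_nonneg (g j' x)) (Finset.mem_univ j)
    have hx0 : (0:ℝ) ≤ x := hx.1
    have : |g j x| = Real.sqrt (g j x ^ 2) := (Real.sqrt_sq_eq_abs _).symm
    rw [this]
    calc Real.sqrt (g j x ^ 2) ≤ Real.sqrt (a * x ^ (2 * k)) := Real.sqrt_le_sqrt h1
      _ = Real.sqrt a * x ^ k := by
          rw [show a * x ^ (2 * k) = a * (x ^ k) ^ 2 by rw [pow_mul'],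
            Real.sqrt_mul ha, Real.sqrt_sq (pow_nonneg hx0 k)]
  -- the two sets agree near 0
  have hset : S' =ᶠ[nhds (0:ℝ)] S := by
    rw [Filter.eventuallyEq_set]
    filter_upwards [Ioo_mem_nhds (show -b < (0:ℝ) by linarith) hb0] with y hy
    simp only [hS', hS, Set.mem_Icc, Set.mem_Ico]
    constructor
    · rintro ⟨h1, h2⟩; exact ⟨h1, by linarith [hy.2]⟩
    · rintro ⟨h1, _⟩; exact ⟨h1, (hy.2).le⟩
  have hcongr : ∀ n, iteratedDerivWithin n (g j) S' 0 = iteratedDerivWithin n (g j) S 0 :=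
    fun n => iteratedDerivWithin_congr_set' n hset
  intro i
  induction i using Nat.strong_induction_on with
  | _ i IH =>
    intro hik
    set c := iteratedDerivWithin i (g j) S 0 with hc
    -- smoothness on S'
    have hf : ContDiffOn ℝ (i + 1 : ℕ) (g j) S' := ((hg j).mono hS'S).of_le (by exact_mod_cast le_top)
    -- bound on the (i+1)-st derivative on S'
    have hcont : ContinuousOn (iteratedDerivWithin (i + 1) (g j) S') S' :=
      hf.continuousOn_iteratedDerivWithin le_rfl (uniqueDiffOn_Icc hb0)
    obtain ⟨C, hC⟩ := isCompact_Icc.exists_bound_of_continuousOn hcont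
    have hC0 : 0 ≤ C := le_trans (norm_nonneg _) (hC 0 ⟨le_rfl, hb0.le⟩)
    -- Taylor polynomial of degree i at 0 reduces to a single term
    have htay : ∀ x : ℝ, taylorWithinEval (g j) i S' 0 x = (i ! : ℝ)⁻¹ * x ^ i * c := by
      intro x
      rw [taylor_within_apply, Finset.sum_range_succ]
      rw [Finset.sum_eq_zero, zero_add, hcongr i, sub_zero, smul_eq_mul, ← hc]
      intro m hm
      rw [Finset.mem_range] at hm
      rw [hcongr m, IH m hm (hm.trans hik)]
      simp
    -- key estimate
    have hkey : ∀ x ∈ Set.Ioc (0:ℝ) (min b 1),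
        |c| / i ! ≤ (Real.sqrt a + C / i !) * x := by
      intro x hx
      have hx0 : 0 < x := hx.1
      have hxb : x ≤ b := le_trans hx.2 (min_le_left _ _)
      have hx1 : x ≤ 1 := le_trans hx.2 (min_le_right _ _)
      have hxS' : x ∈ S' := ⟨hx0.le, hxb⟩
      have htb := taylor_mean_remainder_bound hb0.le hf hxS' hC
      rw [htay x] at htb
      have hgb := hbound x (hS'S hxS')
      have hfac : (0:ℝ) < i ! := by positivity
      have habs : |(i ! : ℝ)⁻¹ * x ^ i * c| = x ^ i * |c| / i ! := by
        rw [abs_mul, abs_mul, abs_inv, abs_of_nonneg (pow_nonneg hx0.le i)]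
        rw [abs_of_nonneg (Nat.cast_nonneg _)]
        ring
      -- |g x - T x| ≤ C (x-0)^(i+1)/i!  and |g x| ≤ √a x^k
      have h1 : x ^ i * |c| / i ! ≤ Real.sqrt a * x ^ k + C * x ^ (i + 1) / i ! := by
        have := abs_sub_abs_le_abs_sub ((i ! : ℝ)⁻¹ * x ^ i * c) (g j x)
        rw [habs] at this
        have h3 : |(i ! : ℝ)⁻¹ * x ^ i * c - g j x| ≤ C * x ^ (i + 1) / i ! := by
          rw [abs_sub_comm, ← Real.norm_eq_abs]
          have := htb
          rw [sub_zero] at this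
          exact this
        linarith
      -- x^k ≤ x^(i+1)
      have h4 : x ^ k ≤ x ^ (i + 1) :=
        pow_le_pow_of_le_one hx0.le hx1 hik
      have h5 : x ^ i * |c| / i ! ≤ (Real.sqrt a + C / i !) * x ^ (i + 1) := by
        have hsa : 0 ≤ Real.sqrt a := Real.sqrt_nonneg a
        have : Real.sqrt a * x ^ k ≤ Real.sqrt a * x ^ (i + 1) := by
          exact mul_le_mul_of_nonneg_left h4 hsa
        calc x ^ i * |c| / i ! ≤ Real.sqrt a * x ^ k + C * x ^ (i + 1) / i ! := h1
          _ ≤ Real.sqrt a * x ^ (i + 1) + C / i ! * x ^ (i + 1) := by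
              rw [div_mul_eq_mul_div, mul_comm C (x ^ (i+1)), mul_div_assoc]
              linarith
          _ = (Real.sqrt a + C / i !) * x ^ (i + 1) := by ring
      -- divide by x^i > 0
      have hxi : 0 < x ^ i := pow_pos hx0 i
      rw [pow_succ] at h5
      have h6 : x ^ i * (|c| / i !) ≤ x ^ i * ((Real.sqrt a + C / i !) * x) := by
        calc x ^ i * (|c| / i !) = x ^ i * |c| / i ! := by ring
          _ ≤ (Real.sqrt a + C / i !) * (x ^ i * x) := h5
          _ = x ^ i * ((Real.sqrt a + C / i !) * x) := by ring
      exact le_of_mul_le_mul_left h6 hxi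
    -- take the limit x → 0⁺
    have hlim : Filter.Tendsto (fun x : ℝ => (Real.sqrt a + C / i !) * x)
        (nhdsWithin 0 (Set.Ioi 0)) (nhds 0) := by
      have h0 : Filter.Tendsto (fun x : ℝ => (Real.sqrt a + C / i !) * x) (nhds 0) (nhds 0) := by
        have : Continuous (fun x : ℝ => (Real.sqrt a + C / i !) * x) := by continuity
        simpa using this.tendsto 0
      exact h0.mono_left nhdsWithin_le_nhds
    have hev : ∀ᶠ x in nhdsWithin (0:ℝ) (Set.Ioi 0),
        |c| / i ! ≤ (Real.sqrt a + C / i !) * x := by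
      filter_upwards [Ioc_mem_nhdsGT (lt_min hb0 one_pos)] with x hx
      exact hkey x hx
    have hle : |c| / i ! ≤ 0 := ge_of_tendsto hlim hev
    have hfac : (0:ℝ) < i ! := by positivity
    have : |c| ≤ 0 := by
      by_contra hcon
      push_neg at hcon
      have : 0 < |c| / i ! := div_pos hcon hfac
      linarith
    have := abs_nonneg c
    have : |c| = 0 := le_antisymm ‹|c| ≤ 0› (abs_nonneg c)
    exact abs_eq_zero.mp this
end

section
/- Let $P \in \mathbb{R}[x_1,\ldots,x_m]$ be a homogeneous polynomial of degree $2k$, and suppose $P(z) = \sum_{j} H_j(z)^2$ for all $z \in \mathbb{R}^m$, where the $H_j : \mathbb{R}^m \to \mathbb{R}$ are finitely many functions each smooth in a neighborhood of the origin. Then $P$ is a sum of squares of real polynomials (each of degree at most $k$). -/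
open scoped ContDiff Topology
open Finset MvPolynomial

section Helpers

lemma my_iteratedDeriv_add {N : WithTop ℕ∞} {f g : ℝ → ℝ} (hf : ContDiff ℝ N f)
    (hg : ContDiff ℝ N g) (n : ℕ) (hn : (n : WithTop ℕ∞) ≤ N)
    (x : ℝ) :
    iteratedDeriv n (fun t => f t + g t) x = iteratedDeriv n f x + iteratedDeriv n g x := by
  have : (fun t => f t + g t) = f + g := rfl
  rw [this, iteratedDeriv_eq_iteratedFDeriv, iteratedDeriv_eq_iteratedFDeriv,
    iteratedDeriv_eq_iteratedFDeriv,
    iteratedFDeriv_add_apply (hf.contDiffAt.of_le hn)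
      (hg.contDiffAt.of_le hn)]
  rfl

lemma my_leibniz {N : WithTop ℕ∞} {f g : ℝ → ℝ} (hf : ContDiff ℝ N f) (hg : ContDiff ℝ N g)
    (n : ℕ) (hn : (n : WithTop ℕ∞) ≤ N) (x : ℝ) :
    iteratedDeriv n (fun t => f t * g t) x =
      ∑ i ∈ range (n + 1), (n.choose i : ℝ) * (iteratedDeriv i f x * iteratedDeriv (n - i) g x) := by
  induction n generalizing f g N with
  | zero => simp [iteratedDeriv_zero]
  | succ n ih =>
    have hf1 : ContDiff ℝ (n + 1) f := hf.of_le (by exact_mod_cast hn)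
    have hg1 : ContDiff ℝ (n + 1) g := hg.of_le (by exact_mod_cast hn)
    have hn1 : ((n : ℕ) : WithTop ℕ∞) ≤ (n + 1 : WithTop ℕ∞) := by exact_mod_cast Nat.le_succ n
    have hf0 : ContDiff ℝ n f := hf1.of_le hn1
    have hg0 : ContDiff ℝ n g := hg1.of_le hn1
    have hf' : ContDiff ℝ n (deriv f) := (contDiff_succ_iff_deriv.mp hf1).2.2
    have hg' : ContDiff ℝ n (deriv g) := (contDiff_succ_iff_deriv.mp hg1).2.2
    have hd : deriv (fun t => f t * g t) = fun t => deriv f t * g t + f t * deriv g t := by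
      funext t
      exact deriv_fun_mul (hf1.differentiable (by simp) t)
        (hg1.differentiable (by simp) t)
    rw [iteratedDeriv_succ', hd,
      my_iteratedDeriv_add (hf'.mul hg0) (hf0.mul hg') n le_rfl x, ih hf' hg0 le_rfl,
      ih hf0 hg' le_rfl,
      Finset.sum_choose_succ_mul (fun i j => iteratedDeriv i f x * iteratedDeriv j g x) n]
    simp_rw [← iteratedDeriv_succ']
    rw [add_comm]
    congr 1
    refine Finset.sum_congr rfl fun i hi => ?_
    rw [Nat.succ_sub (Nat.lt_succ_iff.mp (Finset.mem_range.mp hi))]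

lemma my_iteratedDeriv_const (c : ℝ) (d : ℕ) (x : ℝ) :
    iteratedDeriv d (fun _ : ℝ => c) x = if d = 0 then c else 0 := by
  cases d with
  | zero => simp
  | succ d =>
    rw [iteratedDeriv_eq_iteratedFDeriv]
    rw [iteratedFDeriv_const_of_ne (Nat.succ_ne_zero d)]
    simp

lemma my_iteratedDeriv_cmul {f : ℝ → ℝ} (hf : ContDiff ℝ ∞ f) (c : ℝ) (d : ℕ) (x : ℝ) :
    iteratedDeriv d (fun t => c * f t) x = c * iteratedDeriv d f x := by
  have : (fun t => c * f t) = c • f := rfl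
  rw [this, iteratedDeriv_eq_iteratedFDeriv, iteratedDeriv_eq_iteratedFDeriv,
    iteratedFDeriv_const_smul_apply (hf.contDiffAt.of_le (by exact_mod_cast le_top))]
  rfl

lemma my_iteratedDeriv_pow (n : ℕ) : ∀ (d : ℕ) (x : ℝ),
    iteratedDeriv d (fun t : ℝ => t ^ n) x = (n.descFactorial d : ℝ) * x ^ (n - d) := by
  induction n with
  | zero =>
    intro d x
    cases d with
    | zero => simp
    | succ d =>
      rw [iteratedDeriv_succ']
      have : deriv (fun t : ℝ => t ^ 0) = fun _ : ℝ => (0 : ℝ) := by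
        funext t; simp
      rw [this, my_iteratedDeriv_const 0 d x]
      simp
  | succ n ih =>
    intro d x
    cases d with
    | zero => simp
    | succ d =>
      rw [iteratedDeriv_succ']
      have : deriv (fun t : ℝ => t ^ (n + 1)) = fun t : ℝ => (n + 1 : ℝ) * t ^ n := by
        funext t; simp [deriv_pow]
      rw [this, my_iteratedDeriv_cmul (f := fun t : ℝ => t ^ n) (contDiff_id.pow n) _ d x,
        ih d x, Nat.succ_descFactorial_succ]
      push_cast
      ring

lemma my_iteratedDeriv_sum {N : WithTop ℕ∞} {J : Type*} (s : Finset J) (f : J → ℝ → ℝ)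
    (hf : ∀ j, ContDiff ℝ N (f j)) (n : ℕ) (hn : (n : WithTop ℕ∞) ≤ N) (x : ℝ) :
    iteratedDeriv n (fun t => ∑ j ∈ s, f j t) x = ∑ j ∈ s, iteratedDeriv n (f j) x := by
  classical
  induction s using Finset.induction with
  | empty =>
    simp only [Finset.sum_empty]
    rw [my_iteratedDeriv_const 0 n x]
    simp
  | insert j s hj ih =>
    simp only [Finset.sum_insert hj]
    rw [my_iteratedDeriv_add (hf _) (ContDiff.sum fun j _ => hf j) n hn x, ih]

lemma my_eval_smul {σ : Type*} [Fintype σ] {P : MvPolynomial σ ℝ} {n : ℕ}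
    (hP : P.IsHomogeneous n) (t : ℝ) (z : σ → ℝ) :
    MvPolynomial.eval (t • z) P = t ^ n * MvPolynomial.eval z P := by
  rw [MvPolynomial.eval_eq', MvPolynomial.eval_eq', Finset.mul_sum]
  refine Finset.sum_congr rfl fun d hd => ?_
  have hdeg : ∑ i, d i = n := by
    have h1 : d.degree = n := by
      by_contra h
      exact MvPolynomial.mem_support_iff.mp hd (hP.coeff_eq_zero h)
    rw [← h1, Finsupp.degree]
    exact (Finset.sum_subset (Finset.subset_univ _)
      (fun i _ hi => Finsupp.notMem_support_iff.mp hi)).symm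
  have : ∀ i : σ, (t • z) i = t * z i := fun i => rfl
  simp_rw [this, mul_pow]
  rw [Finset.prod_mul_distrib, Finset.prod_pow_eq_pow_sum, hdeg]
  ring

lemma my_smoothing {n : WithTop ℕ∞} {E : Type*} [NormedAddCommGroup E] [NormedSpace ℝ E] [FiniteDimensional ℝ E]
    {u : Set E} (hu : IsOpen u) (h0 : (0 : E) ∈ u) (hn : n ≤ ∞) :
    ∃ χ : E → ℝ, ContDiff ℝ ∞ χ ∧ (∀ᶠ x in 𝓝 (0 : E), χ x = 1) ∧
      ∀ f : E → ℝ, ContDiffOn ℝ n f u → ContDiff ℝ n (fun x => χ x * f x) := by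
  obtain ⟨ε, hε, hball⟩ := Metric.isOpen_iff.mp hu 0 h0
  obtain ⟨c, hcε⟩ : ∃ c : ContDiffBump (0 : E), c.rOut < ε :=
    ⟨⟨ε / 4, ε / 2, by positivity, by linarith⟩, by simpa using by linarith⟩
  refine ⟨c, c.contDiff, ?_, ?_⟩
  · filter_upwards [Metric.ball_mem_nhds 0 c.rIn_pos] with x hx
    exact c.one_of_mem_closedBall (Metric.ball_subset_closedBall hx)
  · intro f hf
    rw [contDiff_iff_contDiffAt]
    intro x
    by_cases hx : x ∈ u
    · exact ((c.contDiff (n := ⊤)).contDiffAt.of_le hn).mul ((hf x hx).contDiffAt (hu.mem_nhds hx))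
    · have hsupp : x ∉ tsupport (c : E → ℝ) := by
        rw [c.tsupport_eq]
        intro hmem
        exact hx (hball (Metric.closedBall_subset_ball hcε hmem))
      have hop : IsOpen ((tsupport (c : E → ℝ))ᶜ) := (isClosed_tsupport _).isOpen_compl
      have hev : (fun x => (c : E → ℝ) x * f x) =ᶠ[𝓝 x] (fun _ => (0 : ℝ)) := by
        filter_upwards [hop.mem_nhds hsupp] with y hy
        have : (c : E → ℝ) y = 0 := image_eq_zero_of_notMem_tsupport hy
        simp [this]
      exact (contDiffAt_const (c := (0 : ℝ))).congr_of_eventuallyEq hev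

lemma my_core {J : Type*} [Fintype J] (k : ℕ) (c : ℝ) (φ : J → ℝ → ℝ)
    (hφ : ∀ j, ContDiff ℝ (2*k : ℕ) (φ j)) (ψ : ℝ → ℝ) (hψ : ContDiff ℝ ∞ ψ)
    (hψ1 : ∀ᶠ t in 𝓝 (0:ℝ), ψ t = 1)
    (hid : ∀ t, ∑ j, φ j t ^ 2 = ψ t * (t ^ (2*k) * c)) :
    ∑ j, (iteratedDeriv k (φ j) 0 / (k.factorial : ℝ)) ^ 2 = c := by
  set A : J → ℕ → ℝ := fun j i => iteratedDeriv i (φ j) 0 with hA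
  have hψd : ∀ i : ℕ, iteratedDeriv i ψ 0 = if i = 0 then 1 else 0 := by
    intro i
    have h1 : ψ =ᶠ[𝓝 (0:ℝ)] fun _ => (1:ℝ) := hψ1
    rw [h1.iteratedDeriv_eq i, my_iteratedDeriv_const]
  have hg : ContDiff ℝ ∞ (fun t : ℝ => t ^ (2*k) * c) :=
    (contDiff_id.pow _).mul contDiff_const
  have hgd : ∀ d : ℕ, iteratedDeriv d (fun t : ℝ => t ^ (2*k) * c) 0
      = ((2*k).descFactorial d : ℝ) * (0:ℝ) ^ (2*k - d) * c := by
    intro d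
    have h2 : (fun t : ℝ => t ^ (2*k) * c) = fun t => c * t ^ (2*k) := by
      funext t; ring
    rw [h2, my_iteratedDeriv_cmul (f := fun t : ℝ => t ^ (2*k)) (contDiff_id.pow _) c d 0,
      my_iteratedDeriv_pow]
    ring
  have hRd : ∀ d : ℕ, iteratedDeriv d (fun t => ψ t * (t ^ (2*k) * c)) 0
      = ((2*k).descFactorial d : ℝ) * (0:ℝ) ^ (2*k - d) * c := by
    intro d
    rw [my_leibniz hψ hg d (by exact_mod_cast le_top) 0, Finset.sum_eq_single 0]
    · rw [hψd, hgd]; simp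
    · intro i hi hne
      rw [hψd]; simp [hne]
    · intro h; exact absurd (Finset.mem_range.mpr (Nat.succ_pos d)) h
  have hsq : ∀ (j : J), (fun t => φ j t ^ 2) = fun t => φ j t * φ j t := by
    intro j; funext t; ring
  have hEq : ∀ d : ℕ, d ≤ 2*k → (∑ j, ∑ i ∈ range (d+1), ((d.choose i : ℝ)) * (A j i * A j (d-i)))
      = ((2*k).descFactorial d : ℝ) * (0:ℝ) ^ (2*k - d) * c := by
    intro d hd
    rw [← hRd d]
    have hfe : (fun t => ∑ j, φ j t ^ 2) = (fun t => ψ t * (t ^ (2*k) * c)) := by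
      funext t; exact hid t
    rw [← hfe, my_iteratedDeriv_sum Finset.univ _ (fun j => by
        rw [hsq j]; exact (hφ j).mul (hφ j)) d (by exact_mod_cast hd) 0]
    refine Finset.sum_congr rfl fun j _ => ?_
    rw [hsq j, my_leibniz (hφ j) (hφ j) d (by exact_mod_cast hd) 0]
  have hinner : ∀ (e : ℕ) (j' : J), (∀ i, i < e → ∀ j, A j i = 0) →
      ∑ i ∈ range (2*e+1), ((2*e).choose i : ℝ) * (A j' i * A j' (2*e-i))
        = ((2*e).choose e : ℝ) * (A j' e)^2 := by
    intro e j' hprev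
    rw [Finset.sum_eq_single e]
    · have h3 : 2*e - e = e := by omega
      rw [h3, sq]
    · intro i hi hne
      rcases lt_or_gt_of_ne hne with hlt | hgt
      · rw [hprev i hlt j']; ring
      · have h4 : 2*e - i < e := by
          have := Finset.mem_range.mp hi; omega
        rw [hprev _ h4 j']; ring
    · intro h; exact absurd (Finset.mem_range.mpr (by omega)) h
  have hvan : ∀ e, e < k → ∀ j, A j e = 0 := by
    intro e
    induction e using Nat.strong_induction_on with
    | _ e IH =>
      intro he j
      have h2 := hEq (2*e) (by omega)
      have hz : ((2*k).descFactorial (2*e) : ℝ) * (0:ℝ) ^ (2*k - 2*e) * c = 0 := by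
        have h5 : 2*k - 2*e ≠ 0 := by omega
        rw [zero_pow h5]; ring
      rw [hz] at h2
      have hprev : ∀ i, i < e → ∀ j0, A j0 i = 0 := fun i hi j0 => IH i hi (hi.trans he) j0
      rw [Finset.sum_congr rfl (fun j' _ => hinner e j' hprev), ← Finset.mul_sum] at h2
      have hC : ((2*e).choose e : ℝ) ≠ 0 :=
        Nat.cast_ne_zero.mpr (Nat.choose_pos (by omega)).ne'
      have h6 : ∑ j', (A j' e)^2 = 0 := (mul_eq_zero.mp h2).resolve_left hC
      have h7 := (Finset.sum_eq_zero_iff_of_nonneg (fun j' _ => sq_nonneg (A j' e))).mp h6 j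
        (Finset.mem_univ j)
      exact pow_eq_zero_iff (two_ne_zero) |>.mp h7
  have hfin := hEq (2*k) le_rfl
  have hprev : ∀ i, i < k → ∀ j0, A j0 i = 0 := fun i hi j0 => hvan i hi j0
  rw [Finset.sum_congr rfl (fun j' _ => hinner k j' hprev), ← Finset.mul_sum] at hfin
  have hz : (0:ℝ) ^ (2*k - 2*k) = 1 := by simp
  rw [hz, Nat.descFactorial_self] at hfin
  have hfact : ((2*k).choose k : ℝ) * ((k.factorial:ℝ) * (k.factorial:ℝ))
      = ((2*k).factorial : ℝ) := by
    have := Nat.choose_mul_factorial_mul_factorial (show k ≤ 2*k by omega)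
    have h8 : 2*k - k = k := by omega
    rw [h8] at this
    exact_mod_cast congrArg (Nat.cast : ℕ → ℝ) (by rw [← this]; ring)
  have hk0 : (k.factorial : ℝ) ≠ 0 := Nat.cast_ne_zero.mpr k.factorial_ne_zero
  have hC : ((2*k).choose k : ℝ) ≠ 0 := Nat.cast_ne_zero.mpr (Nat.choose_pos (by omega)).ne'
  have h9 : ∑ j, (A j k / (k.factorial:ℝ))^2
      = (∑ j, (A j k)^2) / ((k.factorial:ℝ) * (k.factorial:ℝ)) := by
    rw [Finset.sum_div]
    refine Finset.sum_congr rfl fun j _ => ?_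
    rw [div_pow, pow_two ((k.factorial : ℝ))]
  rw [mul_comm] at hfin
  have h10 : (∑ j, A j k ^ 2) = c * ((k.factorial:ℝ) * k.factorial) := by
    apply mul_right_cancel₀ hC
    rw [hfin, ← hfact]
    ring
  rw [h9, h10]
  field_simp

noncomputable def polyOfML {m k : ℕ}
    (T : ContinuousMultilinearMap ℝ (fun _ : Fin k => (Fin m → ℝ)) ℝ) :
    MvPolynomial (Fin m) ℝ :=
  ∑ w : Fin k → Fin m,
    MvPolynomial.C (T (fun t => Pi.single (w t) 1)) * ∏ t : Fin k, MvPolynomial.X (w t)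

lemma polyOfML_eval {m k : ℕ}
    (T : ContinuousMultilinearMap ℝ (fun _ : Fin k => (Fin m → ℝ)) ℝ) (z : Fin m → ℝ) :
    MvPolynomial.eval z (polyOfML T) = T (fun _ => z) := by
  have hz : ∀ i : Fin k, z = ∑ s : Fin m, z s • (Pi.single s 1 : Fin m → ℝ) := by
    intro i
    funext r
    rw [Finset.sum_apply]
    simp [Pi.single_apply, mul_comm]
  calc MvPolynomial.eval z (polyOfML T)
      = ∑ w : Fin k → Fin m, T (fun t => Pi.single (w t) 1) * ∏ t : Fin k, z (w t) := by
        rw [polyOfML, map_sum]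
        refine Finset.sum_congr rfl fun w _ => ?_
        simp
    _ = ∑ w : Fin k → Fin m, T (fun t => z (w t) • (Pi.single (w t) 1 : Fin m → ℝ)) := by
        refine Finset.sum_congr rfl fun w _ => ?_
        rw [T.map_smul_univ (fun t => z (w t)) (fun t => Pi.single (w t) 1)]
        simp [mul_comm]
    _ = T (fun i => ∑ s : Fin m, z s • (Pi.single s 1 : Fin m → ℝ)) := by
        rw [T.map_sum (g := fun _ s => z s • (Pi.single s 1 : Fin m → ℝ))]
    _ = T (fun _ => z) := by
        congr 1
        funext i
        exact (hz i).symm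

lemma polyOfML_totalDegree {m k : ℕ}
    (T : ContinuousMultilinearMap ℝ (fun _ : Fin k => (Fin m → ℝ)) ℝ) :
    (polyOfML T).totalDegree ≤ k := by
  refine le_trans (totalDegree_finset_sum _ _) ?_
  refine Finset.sup_le fun w _ => ?_
  refine le_trans (totalDegree_mul _ _) ?_
  rw [totalDegree_C]
  refine le_trans (by simp :
    _ ≤ 0 + (∏ t : Fin k, (X (w t) : MvPolynomial (Fin m) ℝ)).totalDegree) ?_
  rw [zero_add]
  refine le_trans (totalDegree_finset_prod _ _) ?_
  simp [totalDegree_X]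

end Helpers

/-- If a real homogeneous polynomial `P` of degree `2k` in `m` variables equals,
as a function on `ℝ^m`, a finite sum of squares of functions `H j` each smooth in a neighborhood
of the origin, then `P` is a sum of squares of polynomials of degree at most `k`. -/
theorem stmt_2 {m : ℕ} (P : MvPolynomial (Fin m) ℝ) (k : ℕ)
    (hP : P.IsHomogeneous (2 * k))
    {J : Type*} [Fintype J] (H : J → (Fin m → ℝ) → ℝ)
    (hH : ∀ j, ContDiffAt ℝ (⊤ : ℕ∞) (H j) 0)
    (hsum : ∀ z : Fin m → ℝ, eval z P = ∑ j, H j z ^ 2) :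
    ∃ (N : ℕ) (q : Fin N → MvPolynomial (Fin m) ℝ),
      P = ∑ i, q i ^ 2 ∧ ∀ i, (q i).totalDegree ≤ k := by
  classical
  have h1 : ∀ j, ∃ u, u ∈ 𝓝 (0 : Fin m → ℝ) ∧ ContDiffOn ℝ (2*k : ℕ) (H j) u := by
    intro j
    obtain ⟨u, hu, hcd⟩ := (hH j).contDiffOn (m := ((2*k : ℕ) : WithTop ℕ∞))
      (WithTop.coe_le_coe.mpr le_top)
      (fun h => (ENat.natCast_ne_top (2*k) (WithTop.coe_injective h)).elim)
    exact ⟨u, hu, hcd⟩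
  choose u hu hcd using h1
  set U : Set (Fin m → ℝ) := interior (⋂ j, u j) with hUdef
  have hUopen : IsOpen U := isOpen_interior
  have hU0 : (0 : Fin m → ℝ) ∈ U := mem_interior_iff_mem_nhds.mpr (Filter.iInter_mem.mpr hu)
  have hcdU : ∀ j, ContDiffOn ℝ (2*k : ℕ) (H j) U := fun j =>
    (hcd j).mono (le_trans interior_subset (Set.iInter_subset u j))
  obtain ⟨χ, hχs, hχ1, hχmul⟩ := my_smoothing (n := ((2*k : ℕ) : WithTop ℕ∞)) hUopen hU0
    (WithTop.coe_le_coe.mpr le_top)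
  set G : J → (Fin m → ℝ) → ℝ := fun j x => χ x * H j x with hG
  have hGs : ∀ j, ContDiff ℝ (2*k : ℕ) (G j) := fun j => hχmul (H j) (hcdU j)
  have hGid : ∀ x, ∑ j, G j x ^ 2 = χ x ^ 2 * eval x P := by
    intro x
    rw [hsum x, Finset.mul_sum]
    refine Finset.sum_congr rfl fun j _ => ?_
    simp only [hG]
    ring
  set q0 : J → MvPolynomial (Fin m) ℝ :=
    fun j => MvPolynomial.C ((k.factorial : ℝ)⁻¹) * polyOfML (iteratedFDeriv ℝ k (G j) 0)
    with hq0
  have hq0deg : ∀ j, (q0 j).totalDegree ≤ k := by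
    intro j
    rw [hq0]
    refine le_trans (totalDegree_mul _ _) ?_
    rw [totalDegree_C, zero_add]
    exact polyOfML_totalDegree _
  have hq0eval : ∀ (z : Fin m → ℝ) (j : J),
      eval z (q0 j) = iteratedDeriv k (fun t : ℝ => G j (t • z)) 0 / (k.factorial : ℝ) := by
    intro z j
    rw [hq0]
    simp only [map_mul, eval_C, polyOfML_eval]
    have hL : (fun t : ℝ => G j (t • z))
        = (G j) ∘ (ContinuousLinearMap.toSpanSingleton ℝ z) := rfl
    rw [hL, iteratedDeriv_eq_iteratedFDeriv,
      ContinuousLinearMap.iteratedFDeriv_comp_right (ContinuousLinearMap.toSpanSingleton ℝ z)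
        (hGs j) 0 (by norm_cast; omega)]
    simp only [ContinuousMultilinearMap.compContinuousLinearMap_apply,
      ContinuousLinearMap.toSpanSingleton_apply, map_zero, zero_smul, one_smul]
    rw [inv_mul_eq_div]
  have hmain : ∀ z : Fin m → ℝ, ∑ j, eval z (q0 j) ^ 2 = eval z P := by
    intro z
    have hLz : ContDiff ℝ ∞ (fun t : ℝ => t • z) :=
      (ContinuousLinearMap.toSpanSingleton ℝ z).contDiff
    have hφs : ∀ j, ContDiff ℝ (2*k : ℕ) (fun t : ℝ => G j (t • z)) := fun j =>
      (hGs j).comp (hLz.of_le (WithTop.coe_le_coe.mpr le_top))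
    have hψs : ContDiff ℝ ∞ (fun t : ℝ => χ (t • z) ^ 2) := (hχs.comp hLz).pow 2
    have hψ1 : ∀ᶠ t in 𝓝 (0:ℝ), χ (t • z) ^ 2 = 1 := by
      have h0 : Filter.Tendsto (fun t : ℝ => t • z) (𝓝 0) (𝓝 0) := by
        have := hLz.continuous.tendsto 0
        rwa [zero_smul] at this
      filter_upwards [h0.eventually hχ1] with t ht
      rw [ht]; norm_num
    have hid : ∀ t : ℝ, ∑ j, (fun s : ℝ => G j (s • z)) t ^ 2
        = (χ (t • z) ^ 2) * (t ^ (2*k) * eval z P) := by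
      intro t
      rw [← my_eval_smul hP t z]
      exact hGid (t • z)
    have hcore := my_core k (eval z P) _ hφs _ hψs hψ1 hid
    rw [← hcore]
    refine Finset.sum_congr rfl fun j _ => ?_
    rw [hq0eval z j]
  have hPol : P = ∑ j, q0 j ^ 2 := by
    apply MvPolynomial.funext
    intro z
    rw [map_sum]
    simp_rw [map_pow]
    exact (hmain z).symm
  refine ⟨Fintype.card J, fun i => q0 ((Fintype.equivFin J).symm i), ?_, fun i => hq0deg _⟩
  rw [hPol]
  exact Fintype.sum_equiv (Fintype.equivFin J) (fun j => q0 j ^ 2)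
    (fun i => q0 ((Fintype.equivFin J).symm i) ^ 2)
    (fun j => by simp)
end

section
/- The Choi polynomial $p(x,y) = |x_1|^2|y_1|^2 + |x_2|^2|y_2|^2 + |x_3|^2|y_3|^2 - 2(\mathrm{Re}[x_1\bar{x}_2 y_1 \bar{y}_2] + \mathrm{Re}[x_2\bar{x}_3 y_2 \bar{y}_3] + \mathrm{Re}[x_1\bar{x}_3 y_1\bar{y}_3]) + 2(|x_1|^2|y_2|^2 + |x_2|^2|y_3|^2 + |x_3|^2|y_1|^2)$ satisfies $p(x,y) \geq 0$ for all $(x,y) \in \mathbb{C}^3 \times \mathbb{C}^3$. -/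
open Complex

lemma choi_real (a1 a2 a3 b1 b2 b3 : ℝ) :
    0 ≤ a1^2*b1^2 + a2^2*b2^2 + a3^2*b3^2
      - 2*(a1*a2*b1*b2 + a2*a3*b2*b3 + a1*a3*b1*b3)
      + 2*(a1^2*b2^2 + a2^2*b3^2 + a3^2*b1^2) := by
  rcases eq_or_ne a1 0 with h1 | h1
  · subst h1; nlinarith [sq_nonneg (a2*b2 - a3*b3), sq_nonneg (a2*b3), sq_nonneg (a3*b1)]
  rcases eq_or_ne a3 0 with h3 | h3
  · subst h3; nlinarith [sq_nonneg (a1*b1 - a2*b2), sq_nonneg (a1*b2), sq_nonneg (a2*b3)]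
  have hα : 0 < a1^2 + 2*a3^2 := by positivity
  have hA : 0 < 2*a1^4 + 2*a2^2*a3^2 + 4*a1^2*a3^2 := by positivity
  have hACB : 0 ≤ 4*(a1^2 + 2*a3^2)*(a2^4*a3^2 + a1^2*a3^4 + a1^2*a2^2*a3^2 + a1^4*a2^2) := by positivity
  nlinarith [mul_pos hA hα,
    mul_nonneg hA.le (sq_nonneg ((a1^2+2*a3^2)*b1 - a1*a2*b2 - a1*a3*b3)),
    sq_nonneg ((2*a1^4+2*a2^2*a3^2+4*a1^2*a3^2)*b2 - 2*a2*a3*(a1^2+a3^2)*b3),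
    mul_nonneg hACB (sq_nonneg b3)]

lemma re_le_prod_abs (u v w z : ℂ) :
    (u * starRingEnd ℂ v * w * starRingEnd ℂ z).re
      ≤ ‖u‖ * ‖v‖ * ‖w‖ * ‖z‖ := by
  calc (u * starRingEnd ℂ v * w * starRingEnd ℂ z).re
      ≤ ‖u * starRingEnd ℂ v * w * starRingEnd ℂ z‖ := Complex.re_le_norm _
    _ = ‖u‖ * ‖v‖ * ‖w‖ * ‖z‖ := by
        simp [map_mul, Complex.norm_conj]

/-- The Choi polynomial is nonnegative on `ℂ³ × ℂ³`. -/
theorem stmt_9 (x₁ x₂ x₃ y₁ y₂ y₃ : ℂ) :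
    0 ≤ normSq x₁ * normSq y₁ + normSq x₂ * normSq y₂ + normSq x₃ * normSq y₃
      - 2 * ((x₁ * starRingEnd ℂ x₂ * y₁ * starRingEnd ℂ y₂).re + (x₂ * starRingEnd ℂ x₃ * y₂ * starRingEnd ℂ y₃).re
           + (x₁ * starRingEnd ℂ x₃ * y₁ * starRingEnd ℂ y₃).re)
      + 2 * (normSq x₁ * normSq y₂ + normSq x₂ * normSq y₃ + normSq x₃ * normSq y₁) := by
  have e : ∀ z : ℂ, normSq z = ‖z‖ ^ 2 := fun z => (Complex.sq_norm z).symm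
  have r1 := re_le_prod_abs x₁ x₂ y₁ y₂
  have r2 := re_le_prod_abs x₂ x₃ y₂ y₃
  have r3 := re_le_prod_abs x₁ x₃ y₁ y₃
  have key := choi_real (‖x₁‖) (‖x₂‖) (‖x₃‖)
    (‖y₁‖) (‖y₂‖) (‖y₃‖)
  rw [e x₁, e x₂, e x₃, e y₁, e y₂, e y₃]
  nlinarith [key, r1, r2, r3]
end

section
/- The restriction of the Choi polynomial to real variables, $P(x,y) = x_1^2 y_1^2 + x_2^2 y_2^2 + x_3^2 y_3^2 - 2(x_1 x_2 y_1 y_2 + x_2 x_3 y_2 y_3 + x_1 x_3 y_1 y_3) + 2(x_1^2 y_2^2 + x_2^2 y_3^2 + x_3^2 y_1^2)$ for $(x,y) \in \mathbb{R}^3 \times \mathbb{R}^3$, is nonnegative but is not a sum of squares of real polynomials. -/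
open MvPolynomial Finset

lemma sos_zero {N : ℕ} (p : Fin N → MvPolynomial (Fin 6) ℝ)
    (h : ∑ i, p i ^ 2 = 0) (i : Fin N) : p i = 0 := by
  have hv : ∀ v : Fin 6 → ℝ, eval v (p i) = 0 := by
    intro v
    have h0 := congrArg (eval v) h
    rw [map_sum, map_zero] at h0
    simp only [map_pow] at h0
    have hnn : ∀ j ∈ Finset.univ, (0:ℝ) ≤ (eval v (p j))^2 := fun j _ => sq_nonneg _
    have := (Finset.sum_eq_zero_iff_of_nonneg hnn).mp h0 i (mem_univ i)
    exact (pow_eq_zero_iff (two_ne_zero (α := ℕ))).mp this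
  apply MvPolynomial.funext (fun x => by rw [hv x, map_zero])

lemma hc_top_ne {p : MvPolynomial (Fin 6) ℝ} (hp : p ≠ 0) :
    homogeneousComponent p.totalDegree p ≠ 0 := by
  obtain ⟨d, hd, hdeg⟩ := Finset.exists_mem_eq_sup p.support
    (support_nonempty.mpr hp) fun s => s.sum fun _ e => e
  intro h0
  have hcoeff : coeff d (homogeneousComponent p.totalDegree p) = coeff d p := by
    rw [coeff_homogeneousComponent, if_pos]
    show (∑ i ∈ d.support, d i) = p.totalDegree
    rw [MvPolynomial.totalDegree, hdeg]; rfl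
  rw [h0, coeff_zero] at hcoeff
  exact (MvPolynomial.mem_support_iff.mp hd) hcoeff.symm

lemma hc_sq {p : MvPolynomial (Fin 6) ℝ} {m : ℕ}
    (h : ∀ k l : ℕ, k + l = 2 * m → k ≠ m →
      homogeneousComponent k p * homogeneousComponent l p = 0) :
    homogeneousComponent (2*m) (p^2) = (homogeneousComponent m p)^2 := by
  set D := p.totalDegree with hD
  have hsplit : p ^ 2 = ∑ k ∈ range (D+1), ∑ l ∈ range (D+1),
      homogeneousComponent k p * homogeneousComponent l p := by
    rw [sq]
    conv_lhs => rw [← sum_homogeneousComponent p, Finset.sum_mul_sum]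
  have hterm : ∀ k l : ℕ, homogeneousComponent (2*m)
      (homogeneousComponent k p * homogeneousComponent l p)
      = if k = m ∧ l = m then (homogeneousComponent m p)^2 else 0 := by
    intro k l
    have hmem : homogeneousComponent k p * homogeneousComponent l p
        ∈ homogeneousSubmodule (Fin 6) ℝ (k+l) := by
      rw [mem_homogeneousSubmodule]
      exact (homogeneousComponent_isHomogeneous k p).mul
        (homogeneousComponent_isHomogeneous l p)
    rw [homogeneousComponent_of_mem hmem]
    by_cases hkl : 2*m = k + l
    · rw [if_pos hkl]
      by_cases hk : k = m
      · have hl : l = m := by omega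
        subst hk; subst hl
        rw [if_pos ⟨rfl, rfl⟩, sq]
      · rw [h k l hkl.symm hk, if_neg (by tauto)]
    · rw [if_neg hkl, if_neg (by omega)]
  rw [hsplit, map_sum]
  simp only [map_sum, hterm]
  by_cases hm : m ≤ D
  · rw [Finset.sum_eq_single m]
    · rw [Finset.sum_eq_single m]
      · simp
      · intro l _ hl; rw [if_neg (by tauto)]
      · intro hmm; exact absurd (Finset.mem_range.mpr (by omega)) hmm
    · intro k _ hk
      apply Finset.sum_eq_zero; intro l _; rw [if_neg (by tauto)]
    · intro hmm; exact absurd (Finset.mem_range.mpr (by omega)) hmm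
  · have hz : homogeneousComponent m p = 0 :=
      homogeneousComponent_eq_zero m p (hD ▸ lt_of_not_ge hm)
    rw [hz]
    have hzero : ∀ k ∈ range (D+1), (∑ l ∈ range (D+1),
        if k = m ∧ l = m then (0 : MvPolynomial (Fin 6) ℝ)^2 else 0) = 0 := by
      intro k _
      apply Finset.sum_eq_zero; intro l _
      by_cases hc : k = m ∧ l = m
      · rw [if_pos hc]; ring
      · rw [if_neg hc]
    rw [Finset.sum_congr rfl hzero]
    simp
open MvPolynomial Finset

/-- The real Choi polynomial in variables `x₁ x₂ x₃ y₁ y₂ y₃` (indexed `0,…,5`). -/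
noncomputable def realChoi : MvPolynomial (Fin 6) ℝ :=
  X 0 ^ 2 * X 3 ^ 2 + X 1 ^ 2 * X 4 ^ 2 + X 2 ^ 2 * X 5 ^ 2
  - 2 * (X 0 * X 1 * X 3 * X 4 + X 1 * X 2 * X 4 * X 5 + X 0 * X 2 * X 3 * X 5)
  + 2 * (X 0 ^ 2 * X 4 ^ 2 + X 1 ^ 2 * X 5 ^ 2 + X 2 ^ 2 * X 3 ^ 2)

lemma realChoi_hom : realChoi.IsHomogeneous 4 := by
  have h2 : (2 : MvPolynomial (Fin 6) ℝ) = C (2:ℝ) := by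
    rw [map_ofNat]
  have hXX : ∀ (i j : Fin 6), ((X i ^ 2 * X j ^ 2 : MvPolynomial (Fin 6) ℝ)).IsHomogeneous 4 :=
    fun i j => by
      simpa using ((isHomogeneous_X ℝ i).pow 2).mul ((isHomogeneous_X ℝ j).pow 2)
  have hX4 : ∀ (i j k l : Fin 6), ((X i * X j * X k * X l : MvPolynomial (Fin 6) ℝ)).IsHomogeneous 4 :=
    fun i j k l => by
      simpa using (((isHomogeneous_X ℝ i).mul (isHomogeneous_X ℝ j)).mul
        (isHomogeneous_X ℝ k)).mul (isHomogeneous_X ℝ l)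
  have hc2 : ∀ (p : MvPolynomial (Fin 6) ℝ), p.IsHomogeneous 4 →
      ((2:MvPolynomial (Fin 6) ℝ) * p).IsHomogeneous 4 := fun p hp => by
    rw [h2]; simpa using (isHomogeneous_C (Fin 6) (2:ℝ)).mul hp
  unfold realChoi
  apply MvPolynomial.IsHomogeneous.add
  apply MvPolynomial.IsHomogeneous.sub
  · exact ((hXX 0 3).add (hXX 1 4)).add (hXX 2 5)
  · exact hc2 _ (((hX4 0 1 3 4).add (hX4 1 2 4 5)).add (hX4 0 2 3 5))
  · exact hc2 _ (((hXX 0 4).add (hXX 1 5)).add (hXX 2 3))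

lemma realChoi_ne : realChoi ≠ 0 := by
  intro h
  have := congrArg (eval (fun j : Fin 6 => if j = 0 ∨ j = 3 then (1:ℝ) else 0)) h
  simp [realChoi] at this

theorem q_hom {N : ℕ} (q : Fin N → MvPolynomial (Fin 6) ℝ)
    (hq : realChoi = ∑ i, q i ^ 2) : ∀ i, (q i).IsHomogeneous 2 := by
  have hsum : ∀ n, homogeneousComponent n realChoi
      = ∑ i, homogeneousComponent n (q i ^ 2) := fun n => by rw [hq, map_sum]
  have hcP : ∀ n, n ≠ 4 → homogeneousComponent n realChoi = 0 := fun n hn => by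
    rw [homogeneousComponent_of_mem ((mem_homogeneousSubmodule _ _).mpr realChoi_hom),
      if_neg hn]
  have hdesc : ∀ M, (∀ i, (q i).totalDegree ≤ M) → ∀ i, (q i).totalDegree ≤ 2 := by
    intro M
    induction M with
    | zero => exact fun h i => le_trans (h i) (by norm_num)
    | succ M ih =>
      intro h i
      by_cases hM : M + 1 ≤ 2
      · exact le_trans (h i) hM
      · apply ih
        intro j
        have hstep : ∀ i', homogeneousComponent (2*(M+1)) (q i' ^ 2)
            = (homogeneousComponent (M+1) (q i'))^2 := by
          intro i'
          apply hc_sq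
          intro k l hkl hk
          rcases (by omega : M+1 < k ∨ M+1 < l) with h' | h'
          · rw [homogeneousComponent_eq_zero k _ (lt_of_le_of_lt (h i') h'), zero_mul]
          · rw [homogeneousComponent_eq_zero l _ (lt_of_le_of_lt (h i') h'), mul_zero]
        have h0 : ∑ i', (homogeneousComponent (M+1) (q i'))^2 = 0 := by
          rw [← Finset.sum_congr rfl (fun i' _ => hstep i'), ← hsum, hcP _ (by omega)]
        have hcomp : homogeneousComponent (M+1) (q j) = 0 := sos_zero _ h0 j
        by_cases hz : q j = 0
        · rw [hz]; simp
        · by_contra hgt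
          push_neg at hgt
          have hEq : (q j).totalDegree = M+1 := le_antisymm (h j) (by omega)
          exact hc_top_ne hz (hEq ▸ hcomp)
  have hle2 : ∀ i, (q i).totalDegree ≤ 2 :=
    hdesc (Finset.sup univ fun i => (q i).totalDegree) (fun i => Finset.le_sup (f := fun i => (q i).totalDegree) (mem_univ i))
  have hlow : ∀ m, m < 2 → ∀ i, homogeneousComponent m (q i) = 0 := by
    intro m
    induction m using Nat.strong_induction_on with
    | _ m ih =>
      intro hm i
      have hstep : ∀ i', homogeneousComponent (2*m) (q i' ^ 2)
          = (homogeneousComponent m (q i'))^2 := by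
        intro i'; apply hc_sq; intro k l hkl hk
        rcases (by omega : k < m ∨ l < m) with h' | h'
        · rw [ih k h' (by omega) i', zero_mul]
        · rw [ih l h' (by omega) i', mul_zero]
      have h0 : ∑ i', (homogeneousComponent m (q i'))^2 = 0 := by
        rw [← Finset.sum_congr rfl (fun i' _ => hstep i'), ← hsum, hcP _ (by omega)]
      exact sos_zero _ h0 i
  intro i d hd
  have hk : coeff d (homogeneousComponent d.degree (q i)) = coeff d (q i) := by
    rw [coeff_homogeneousComponent, if_pos rfl]
  have hdeg : d.degree = 2 := by
    rcases lt_trichotomy d.degree 2 with h' | h' | h'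
    · rw [hlow _ h' i] at hk; simp at hk; exact absurd hk.symm hd
    · exact h'
    · rw [homogeneousComponent_eq_zero _ _ (lt_of_le_of_lt (hle2 i) h')] at hk
      simp at hk; exact absurd hk.symm hd
  change (Finsupp.weight fun _ => 1) d = 2
  rw [← Finsupp.degree_eq_weight_one]
  exact hdeg

lemma choi_nonneg (x1 x2 x3 y1 y2 y3 : ℝ) :
    0 ≤ x1^2*y1^2 + x2^2*y2^2 + x3^2*y3^2
      - 2*(x1*x2*y1*y2 + x2*x3*y2*y3 + x1*x3*y1*y3)
      + 2*(x1^2*y2^2 + x2^2*y3^2 + x3^2*y1^2) := by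
  rcases lt_or_ge (x1^2+x3^2) (x2^2) with h1 | h1
  · -- c1 < 0, s = x1^2+x3^2
    rcases eq_or_lt_of_le (by positivity : (0:ℝ) ≤ x1^2 + x3^2) with h0 | h0
    · have hx1 : x1 = 0 := by nlinarith [sq_nonneg x1, sq_nonneg x3]
      have hx3 : x3 = 0 := by nlinarith [sq_nonneg x1, sq_nonneg x3]
      subst hx1; subst hx3; nlinarith [sq_nonneg (x2*y2), sq_nonneg (x2*y3)]
    · nlinarith [h0, sq_nonneg ((x1^2+x3^2)*y1 - x1*x2*y2),
        mul_pos h0 h0,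
        mul_nonneg h0.le (sq_nonneg (x2*y3-x3*y2)),
        mul_nonneg h0.le (sq_nonneg (x1*y3-x3*y1)),
        mul_nonneg (by linarith : (0:ℝ) ≤ x2^2-x1^2-x3^2) (sq_nonneg (x3*y2)),
        mul_nonneg h0.le (sq_nonneg (x1*y2)),
        mul_nonneg (mul_nonneg (by nlinarith [sq_nonneg x3] : (0:ℝ) ≤ x2^2+x3^2-x1^2) h0.le) (sq_nonneg y3)]
  · rcases lt_or_ge (x2^2+x1^2) (x3^2) with h2 | h2
    · rcases eq_or_lt_of_le (by positivity : (0:ℝ) ≤ x2^2 + x1^2) with h0 | h0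
      · have hx1 : x1 = 0 := by nlinarith [sq_nonneg x1, sq_nonneg x2]
        have hx2 : x2 = 0 := by nlinarith [sq_nonneg x1, sq_nonneg x2]
        subst hx1; subst hx2; nlinarith [sq_nonneg (x3*y3), sq_nonneg (x3*y1)]
      · nlinarith [h0, sq_nonneg ((x2^2+x1^2)*y2 - x2*x3*y3),
          mul_nonneg h0.le (sq_nonneg (x3*y1-x1*y3)),
          mul_nonneg h0.le (sq_nonneg (x2*y1-x1*y2)),
          mul_nonneg (by linarith : (0:ℝ) ≤ x3^2-x2^2-x1^2) (sq_nonneg (x1*y3)),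
          mul_nonneg h0.le (sq_nonneg (x2*y3)),
          mul_nonneg (mul_nonneg (by nlinarith [sq_nonneg x1] : (0:ℝ) ≤ x3^2+x1^2-x2^2) h0.le) (sq_nonneg y1)]
    · rcases lt_or_ge (x3^2+x2^2) (x1^2) with h3 | h3
      · rcases eq_or_lt_of_le (by positivity : (0:ℝ) ≤ x3^2 + x2^2) with h0 | h0
        · have hx2 : x2 = 0 := by nlinarith [sq_nonneg x2, sq_nonneg x3]
          have hx3 : x3 = 0 := by nlinarith [sq_nonneg x2, sq_nonneg x3]
          subst hx2; subst hx3; nlinarith [sq_nonneg (x1*y1), sq_nonneg (x1*y2)]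
        · nlinarith [h0, sq_nonneg ((x3^2+x2^2)*y3 - x3*x1*y1),
            mul_nonneg h0.le (sq_nonneg (x1*y2-x2*y1)),
            mul_nonneg h0.le (sq_nonneg (x3*y2-x2*y3)),
            mul_nonneg (by linarith : (0:ℝ) ≤ x1^2-x3^2-x2^2) (sq_nonneg (x2*y1)),
            mul_nonneg h0.le (sq_nonneg (x3*y1)),
            mul_nonneg (mul_nonneg (by nlinarith [sq_nonneg x2] : (0:ℝ) ≤ x1^2+x2^2-x3^2) h0.le) (sq_nonneg y2)]
      · nlinarith [sq_nonneg (x1*y2-x2*y1), sq_nonneg (x1*y3-x3*y1), sq_nonneg (x2*y3-x3*y2),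
          mul_nonneg (by linarith : (0:ℝ) ≤ x1^2+x3^2-x2^2) (sq_nonneg y1),
          mul_nonneg (by linarith : (0:ℝ) ≤ x1^2+x2^2-x3^2) (sq_nonneg y2),
          mul_nonneg (by nlinarith [sq_nonneg x3] : (0:ℝ) ≤ x2^2+x3^2-x1^2) (sq_nonneg y3)]

lemma coeff_aeval_mask (c : Fin 6 → Bool) (p : MvPolynomial (Fin 6) ℝ) (m : Fin 6 →₀ ℕ)
    (hm : ∀ j, c j = false → m j = 0) :
    coeff m (aeval (fun j => if c j then X j else (0 : MvPolynomial (Fin 6) ℝ)) p)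
      = coeff m p := by
  conv_rhs => rw [p.as_sum]
  conv_lhs => rw [p.as_sum, map_sum]
  rw [coeff_sum, coeff_sum]
  apply Finset.sum_congr rfl
  intro d _
  by_cases hd : ∀ j ∈ d.support, c j = true
  · have : (aeval (fun j => if c j then X j else (0 : MvPolynomial (Fin 6) ℝ)))
        (monomial d (coeff d p)) = monomial d (coeff d p) := by
      rw [aeval_monomial, monomial_eq]
      congr 1
      apply Finsupp.prod_congr
      intro j hj
      rw [if_pos (hd j hj)]
    rw [this]
  · push_neg at hd
    obtain ⟨j, hj, hcj⟩ := hd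
    have hcj' : c j = false := by simpa using hcj
    have hL : (aeval (fun j => if c j then X j else (0 : MvPolynomial (Fin 6) ℝ)))
        (monomial d (coeff d p)) = 0 := by
      rw [aeval_monomial]
      have : (d.prod fun j e => (if c j then X j else (0 : MvPolynomial (Fin 6) ℝ)) ^ e) = 0 := by
        apply Finset.prod_eq_zero hj
        show (if c j = true then X j else (0 : MvPolynomial (Fin 6) ℝ)) ^ (d j) = 0
        rw [hcj', if_neg (by simp)]
        exact zero_pow (Finsupp.mem_support_iff.mp hj)
      rw [this, mul_zero]
    rw [hL, coeff_monomial,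
      if_neg (by intro hdm; exact (Finsupp.mem_support_iff.mp hj) (by rw [hdm]; exact hm j hcj'))]
    simp

lemma phiX_realChoi :
    aeval (fun j : Fin 6 => if ((j:ℕ) < 3 : Bool) then X j else (0 : MvPolynomial (Fin 6) ℝ))
      realChoi = 0 := by
  simp [realChoi, show ((3:Fin 6):ℕ)=3 from rfl, show ((4:Fin 6):ℕ)=4 from rfl,
    show ((5:Fin 6):ℕ)=5 from rfl]

lemma phiY_realChoi :
    aeval (fun j : Fin 6 => if (3 ≤ (j:ℕ) : Bool) then X j else (0 : MvPolynomial (Fin 6) ℝ))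
      realChoi = 0 := by
  simp [realChoi, show ((0:Fin 6):ℕ)=0 from rfl, show ((1:Fin 6):ℕ)=1 from rfl,
    show ((2:Fin 6):ℕ)=2 from rfl]

def jx (j : Fin 3) : Fin 6 := ⟨j.val, by omega⟩
def ky (k : Fin 3) : Fin 6 := ⟨k.val + 3, by omega⟩

noncomputable def dmon (jk : Fin 3 × Fin 3) : Fin 6 →₀ ℕ :=
  Finsupp.single (jx jk.1) 1 + Finsupp.single (ky jk.2) 1

lemma jx_inj : Function.Injective jx := fun a b h => by
  simpa [jx, Fin.ext_iff] using h
lemma ky_inj : Function.Injective ky := fun a b h => by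
  simp [ky, Fin.ext_iff] at h; exact Fin.ext h
lemma jx_ne_ky (a b : Fin 3) : jx a ≠ ky b := by
  simp [jx, ky, Fin.ext_iff]; omega

lemma dmon_apply_jx (jk : Fin 3 × Fin 3) (a : Fin 3) :
    dmon jk (jx a) = if jk.1 = a then 1 else 0 := by
  rw [dmon, Finsupp.add_apply, Finsupp.single_apply, Finsupp.single_apply,
    if_neg (jx_ne_ky a jk.2).symm, add_zero]
  by_cases h : jk.1 = a
  · rw [if_pos (by rw [h]), if_pos h]
  · rw [if_neg (fun hh => h (jx_inj hh)), if_neg h]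

lemma dmon_apply_ky (jk : Fin 3 × Fin 3) (b : Fin 3) :
    dmon jk (ky b) = if jk.2 = b then 1 else 0 := by
  rw [dmon, Finsupp.add_apply, Finsupp.single_apply, Finsupp.single_apply,
    if_neg (jx_ne_ky jk.1 b), zero_add]
  by_cases h : jk.2 = b
  · rw [if_pos (by rw [h]), if_pos h]
  · rw [if_neg (fun hh => h (ky_inj hh)), if_neg h]

lemma dmon_inj : Function.Injective dmon := by
  intro jk jk' h
  have h1 := congrArg (fun f => Finsupp.toFun f (jx jk.1)) h
  have h2 := congrArg (fun f => Finsupp.toFun f (ky jk.2)) h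
  have h1' : dmon jk (jx jk.1) = dmon jk' (jx jk.1) := by exact congrFun (congrArg _ h) _
  have h2' : dmon jk (ky jk.2) = dmon jk' (ky jk.2) := by exact congrFun (congrArg _ h) _
  rw [dmon_apply_jx, dmon_apply_jx, if_pos rfl] at h1'
  rw [dmon_apply_ky, dmon_apply_ky, if_pos rfl] at h2'
  have e1 : jk'.1 = jk.1 := by by_contra hc; rw [if_neg hc] at h1'; exact one_ne_zero h1'
  have e2 : jk'.2 = jk.2 := by by_contra hc; rw [if_neg hc] at h2'; exact one_ne_zero h2'
  exact Prod.ext e1.symm e2.symm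

lemma monomial_pair (d1 d2 : Fin 6) (c : ℝ) :
    (monomial (Finsupp.single d1 1 + Finsupp.single d2 1) c : MvPolynomial (Fin 6) ℝ)
      = C c * X d1 * X d2 := by
  rw [C_apply, X, X, monomial_mul, monomial_mul]
  simp

lemma degree_eq_sum6 (m : Fin 6 →₀ ℕ) :
    m.degree = m 0 + m 1 + m 2 + m 3 + m 4 + m 5 := by
  have : m.degree = ∑ l : Fin 6, m l := by
    rw [Finsupp.degree]
    exact Finset.sum_subset (Finset.subset_univ _)
      (fun x _ hx => Finsupp.notMem_support_iff.mp hx)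
  rw [this, Fin.sum_univ_six]

lemma eq_dmon (m : Fin 6 →₀ ℕ) (j k : Fin 3) (hj : m (jx j) = 1) (hk : m (ky k) = 1)
    (hother : ∀ l : Fin 6, l ≠ jx j → l ≠ ky k → m l = 0) : m = dmon (j,k) := by
  ext l
  by_cases h1 : l = jx j
  · subst h1
    rw [dmon_apply_jx, if_pos rfl]
    exact hj
  · by_cases h2 : l = ky k
    · subst h2
      rw [dmon_apply_ky, if_pos rfl]
      exact hk
    · rw [hother l h1 h2, dmon, Finsupp.add_apply, Finsupp.single_apply, Finsupp.single_apply,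
        if_neg (fun h => h1 h.symm), if_neg (fun h => h2 h.symm), add_zero]

lemma support_classify (p : MvPolynomial (Fin 6) ℝ) (hhom : p.IsHomogeneous 2)
    (hx : aeval (fun j : Fin 6 => if ((j:ℕ) < 3 : Bool) then X j else (0 : MvPolynomial (Fin 6) ℝ)) p = 0)
    (hy : aeval (fun j : Fin 6 => if (3 ≤ (j:ℕ) : Bool) then X j else (0 : MvPolynomial (Fin 6) ℝ)) p = 0) :
    ∀ m ∈ p.support, ∃ jk : Fin 3 × Fin 3, m = dmon jk := by
  intro m hm
  have hcoeff := MvPolynomial.mem_support_iff.mp hm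
  have hdeg : m 0 + m 1 + m 2 + m 3 + m 4 + m 5 = 2 := by
    have h2 := hhom hcoeff
    change (Finsupp.weight fun _ => 1) m = 2 at h2
    rw [← Finsupp.degree_eq_weight_one, degree_eq_sum6] at h2
    omega
  have hxfree : ¬(m 3 = 0 ∧ m 4 = 0 ∧ m 5 = 0) := by
    rintro ⟨h3, h4, h5⟩
    have hmask : ∀ j : Fin 6, (((j:ℕ) < 3 : Bool) = false) → m j = 0 := by
      intro j hj
      fin_cases j <;> simp_all
    have := coeff_aeval_mask (fun j : Fin 6 => ((j:ℕ) < 3 : Bool)) p m hmask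
    rw [hx, coeff_zero] at this
    exact hcoeff this.symm
  have hyfree : ¬(m 0 = 0 ∧ m 1 = 0 ∧ m 2 = 0) := by
    rintro ⟨h0, h1, h2⟩
    have hmask : ∀ j : Fin 6, ((3 ≤ (j:ℕ) : Bool) = false) → m j = 0 := by
      intro j hj
      fin_cases j <;> simp_all
    have := coeff_aeval_mask (fun j : Fin 6 => (3 ≤ (j:ℕ) : Bool)) p m hmask
    rw [hy, coeff_zero] at this
    exact hcoeff this.symm
  have hxs : (m 0 = 1 ∧ m 1 = 0 ∧ m 2 = 0) ∨ (m 1 = 1 ∧ m 0 = 0 ∧ m 2 = 0)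
      ∨ (m 2 = 1 ∧ m 0 = 0 ∧ m 1 = 0) := by omega
  have hys : (m 3 = 1 ∧ m 4 = 0 ∧ m 5 = 0) ∨ (m 4 = 1 ∧ m 3 = 0 ∧ m 5 = 0)
      ∨ (m 5 = 1 ∧ m 3 = 0 ∧ m 4 = 0) := by omega
  have e0 : m 0 = 1 ∨ m 0 = 0 := by omega
  clear e0
  obtain ⟨e0', ee⟩ : ∃ x : ℕ, x = 0 := ⟨0, rfl⟩
  clear ee e0'
  rcases hxs with ⟨ej, ea, eb⟩ | ⟨ej, ea, eb⟩ | ⟨ej, ea, eb⟩ <;>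
    rcases hys with ⟨fk, fa, fb⟩ | ⟨fk, fa, fb⟩ | ⟨fk, fa, fb⟩
  · exact ⟨(0,0), eq_dmon m 0 0 ej fk
      (by intro l h1 h2; fin_cases l <;>
        first
        | exact absurd rfl h1 | exact absurd rfl h2
        | exact ea | exact eb | exact fa | exact fb)⟩
  · exact ⟨(0,1), eq_dmon m 0 1 ej fk
      (by intro l h1 h2; fin_cases l <;>
        first
        | exact absurd rfl h1 | exact absurd rfl h2
        | exact ea | exact eb | exact fa | exact fb)⟩
  · exact ⟨(0,2), eq_dmon m 0 2 ej fk
      (by intro l h1 h2; fin_cases l <;>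
        first
        | exact absurd rfl h1 | exact absurd rfl h2
        | exact ea | exact eb | exact fa | exact fb)⟩
  · exact ⟨(1,0), eq_dmon m 1 0 ej fk
      (by intro l h1 h2; fin_cases l <;>
        first
        | exact absurd rfl h1 | exact absurd rfl h2
        | exact ea | exact eb | exact fa | exact fb)⟩
  · exact ⟨(1,1), eq_dmon m 1 1 ej fk
      (by intro l h1 h2; fin_cases l <;>
        first
        | exact absurd rfl h1 | exact absurd rfl h2
        | exact ea | exact eb | exact fa | exact fb)⟩
  · exact ⟨(1,2), eq_dmon m 1 2 ej fk
      (by intro l h1 h2; fin_cases l <;>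
        first
        | exact absurd rfl h1 | exact absurd rfl h2
        | exact ea | exact eb | exact fa | exact fb)⟩
  · exact ⟨(2,0), eq_dmon m 2 0 ej fk
      (by intro l h1 h2; fin_cases l <;>
        first
        | exact absurd rfl h1 | exact absurd rfl h2
        | exact ea | exact eb | exact fa | exact fb)⟩
  · exact ⟨(2,1), eq_dmon m 2 1 ej fk
      (by intro l h1 h2; fin_cases l <;>
        first
        | exact absurd rfl h1 | exact absurd rfl h2
        | exact ea | exact eb | exact fa | exact fb)⟩
  · exact ⟨(2,2), eq_dmon m 2 2 ej fk
      (by intro l h1 h2; fin_cases l <;>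
        first
        | exact absurd rfl h1 | exact absurd rfl h2
        | exact ea | exact eb | exact fa | exact fb)⟩

lemma q_repr (p : MvPolynomial (Fin 6) ℝ) (hcl : ∀ m ∈ p.support, ∃ jk : Fin 3 × Fin 3, m = dmon jk) :
    p = ∑ jk : Fin 3 × Fin 3, C (coeff (dmon jk) p) * X (jx jk.1) * X (ky jk.2) := by
  have hsub : p.support ⊆ Finset.univ.image dmon := by
    intro m hm
    obtain ⟨jk, rfl⟩ := hcl m hm
    exact Finset.mem_image.mpr ⟨jk, Finset.mem_univ _, rfl⟩
  conv_lhs => rw [p.as_sum]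
  rw [Finset.sum_subset hsub (fun d _ hd => by
      rw [MvPolynomial.notMem_support_iff.mp hd]; simp)]
  rw [Finset.sum_image (fun x _ y _ h => dmon_inj h)]
  apply Finset.sum_congr rfl
  intro jk _
  rw [dmon, monomial_pair]

lemma jx0 : jx 0 = 0 := rfl
lemma jx1 : jx 1 = 1 := rfl
lemma jx2 : jx 2 = 2 := rfl
lemma ky0 : ky 0 = 3 := rfl
lemma ky1 : ky 1 = 4 := rfl
lemma ky2 : ky 2 = 5 := rfl

lemma hexp (b : Fin 3 → Fin 3 → ℝ) (v : Fin 6 → ℝ) :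
    (∑ jk : Fin 3 × Fin 3, b jk.1 jk.2 * v (jx jk.1) * v (ky jk.2))
    = b 0 0 * v 0 * v 3 + b 0 1 * v 0 * v 4 + b 0 2 * v 0 * v 5
    + b 1 0 * v 1 * v 3 + b 1 1 * v 1 * v 4 + b 1 2 * v 1 * v 5
    + b 2 0 * v 2 * v 3 + b 2 1 * v 2 * v 4 + b 2 2 * v 2 * v 5 := by
  rw [Fintype.sum_prod_type]
  simp [Fin.sum_univ_three, jx0, jx1, jx2, ky0, ky1, ky2]
  ring

lemma sum_sq3 {N : ℕ} (f g h : Fin N → ℝ) (e d : ℝ) :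
    ∑ i, (f i + e * g i + d * h i)^2
      = ∑ i, (f i)^2 + e^2 * ∑ i, (g i)^2 + d^2 * ∑ i, (h i)^2
        + 2*e*∑ i, (f i * g i) + 2*d*∑ i, (f i * h i) + 2*e*d*∑ i, (g i * h i) := by
  rw [Finset.mul_sum, Finset.mul_sum, Finset.mul_sum, Finset.mul_sum, Finset.mul_sum,
    ← Finset.sum_add_distrib, ← Finset.sum_add_distrib, ← Finset.sum_add_distrib,
    ← Finset.sum_add_distrib, ← Finset.sum_add_distrib]
  exact Finset.sum_congr rfl fun i _ => by ring


set_option maxHeartbeats 1600000 in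
/-- The restriction of the Choi polynomial to real variables is nonnegative
on `ℝ⁶` but is not a sum of squares of real polynomials. -/
theorem stmt_10 :
    (∀ v : Fin 6 → ℝ, 0 ≤ eval v realChoi) ∧
    ¬ ∃ (N : ℕ) (q : Fin N → MvPolynomial (Fin 6) ℝ), realChoi = ∑ i, q i ^ 2 := by
  constructor
  · intro v
    have hEq : eval v realChoi =
        v 0^2*v 3^2 + v 1^2*v 4^2 + v 2^2*v 5^2
        - 2*(v 0*v 1*v 3*v 4 + v 1*v 2*v 4*v 5 + v 0*v 2*v 3*v 5)
        + 2*(v 0^2*v 4^2 + v 1^2*v 5^2 + v 2^2*v 3^2) := by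
      simp [realChoi]
    rw [hEq]
    exact choi_nonneg (v 0) (v 1) (v 2) (v 3) (v 4) (v 5)
  rintro ⟨N, q, hq⟩
  have hhom := q_hom q hq
  have hkx : ∀ i, aeval (fun j : Fin 6 => if ((j:ℕ) < 3 : Bool) then X j
      else (0 : MvPolynomial (Fin 6) ℝ)) (q i) = 0 := by
    apply sos_zero
    have h := congrArg (aeval (fun j : Fin 6 => if ((j:ℕ) < 3 : Bool) then X j
      else (0 : MvPolynomial (Fin 6) ℝ))) hq
    rw [map_sum] at h
    simp only [map_pow] at h
    rw [← h, phiX_realChoi]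
  have hky : ∀ i, aeval (fun j : Fin 6 => if (3 ≤ (j:ℕ) : Bool) then X j
      else (0 : MvPolynomial (Fin 6) ℝ)) (q i) = 0 := by
    apply sos_zero
    have h := congrArg (aeval (fun j : Fin 6 => if (3 ≤ (j:ℕ) : Bool) then X j
      else (0 : MvPolynomial (Fin 6) ℝ))) hq
    rw [map_sum] at h
    simp only [map_pow] at h
    rw [← h, phiY_realChoi]
  set a : Fin N → Fin 3 → Fin 3 → ℝ := fun i j k => coeff (dmon (j,k)) (q i) with ha
  have hrep : ∀ (i : Fin N) (v : Fin 6 → ℝ), eval v (q i)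
      = ∑ jk : Fin 3 × Fin 3, a i jk.1 jk.2 * v (jx jk.1) * v (ky jk.2) := by
    intro i v
    conv_lhs => rw [q_repr (q i) (support_classify _ (hhom i) (hkx i) (hky i))]
    rw [map_sum]
    apply Finset.sum_congr rfl
    intro jk _
    simp [ha]
  have hEv : ∀ v : Fin 6 → ℝ,
      (∑ i, (∑ jk : Fin 3 × Fin 3, a i jk.1 jk.2 * v (jx jk.1) * v (ky jk.2))^2)
        = eval v realChoi := by
    intro v
    rw [hq, map_sum]
    simp only [map_pow]
    exact Finset.sum_congr rfl fun i _ => by rw [hrep i v]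
  have E10 : ∑ i, (a i 1 0)^2 = (0:ℝ) := by
    have h := hEv ![(0:ℝ),(1:ℝ),(0:ℝ),(1:ℝ),(0:ℝ),(0:ℝ)]
    have hE100 : (![(0:ℝ),(1:ℝ),(0:ℝ),(1:ℝ),(0:ℝ),(0:ℝ)]) 0 = 0 := rfl
    have hE101 : (![(0:ℝ),(1:ℝ),(0:ℝ),(1:ℝ),(0:ℝ),(0:ℝ)]) 1 = 1 := rfl
    have hE102 : (![(0:ℝ),(1:ℝ),(0:ℝ),(1:ℝ),(0:ℝ),(0:ℝ)]) 2 = 0 := rfl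
    have hE103 : (![(0:ℝ),(1:ℝ),(0:ℝ),(1:ℝ),(0:ℝ),(0:ℝ)]) 3 = 1 := rfl
    have hE104 : (![(0:ℝ),(1:ℝ),(0:ℝ),(1:ℝ),(0:ℝ),(0:ℝ)]) 4 = 0 := rfl
    have hE105 : (![(0:ℝ),(1:ℝ),(0:ℝ),(1:ℝ),(0:ℝ),(0:ℝ)]) 5 = 0 := rfl
    simp only [hexp] at h
    simp only [realChoi, map_add, map_sub, map_mul, map_pow, map_ofNat, eval_X,
      hE100, hE101, hE102, hE103, hE104, hE105] at h
    norm_num at h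
    all_goals rw [← h]
    all_goals exact Finset.sum_congr rfl fun i _ => by ring
  have E21 : ∑ i, (a i 2 1)^2 = (0:ℝ) := by
    have h := hEv ![(0:ℝ),(0:ℝ),(1:ℝ),(0:ℝ),(1:ℝ),(0:ℝ)]
    have hE210 : (![(0:ℝ),(0:ℝ),(1:ℝ),(0:ℝ),(1:ℝ),(0:ℝ)]) 0 = 0 := rfl
    have hE211 : (![(0:ℝ),(0:ℝ),(1:ℝ),(0:ℝ),(1:ℝ),(0:ℝ)]) 1 = 0 := rfl
    have hE212 : (![(0:ℝ),(0:ℝ),(1:ℝ),(0:ℝ),(1:ℝ),(0:ℝ)]) 2 = 1 := rfl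
    have hE213 : (![(0:ℝ),(0:ℝ),(1:ℝ),(0:ℝ),(1:ℝ),(0:ℝ)]) 3 = 0 := rfl
    have hE214 : (![(0:ℝ),(0:ℝ),(1:ℝ),(0:ℝ),(1:ℝ),(0:ℝ)]) 4 = 1 := rfl
    have hE215 : (![(0:ℝ),(0:ℝ),(1:ℝ),(0:ℝ),(1:ℝ),(0:ℝ)]) 5 = 0 := rfl
    simp only [hexp] at h
    simp only [realChoi, map_add, map_sub, map_mul, map_pow, map_ofNat, eval_X,
      hE210, hE211, hE212, hE213, hE214, hE215] at h
    norm_num at h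
    all_goals rw [← h]
    all_goals exact Finset.sum_congr rfl fun i _ => by ring
  have E02 : ∑ i, (a i 0 2)^2 = (0:ℝ) := by
    have h := hEv ![(1:ℝ),(0:ℝ),(0:ℝ),(0:ℝ),(0:ℝ),(1:ℝ)]
    have hE020 : (![(1:ℝ),(0:ℝ),(0:ℝ),(0:ℝ),(0:ℝ),(1:ℝ)]) 0 = 1 := rfl
    have hE021 : (![(1:ℝ),(0:ℝ),(0:ℝ),(0:ℝ),(0:ℝ),(1:ℝ)]) 1 = 0 := rfl
    have hE022 : (![(1:ℝ),(0:ℝ),(0:ℝ),(0:ℝ),(0:ℝ),(1:ℝ)]) 2 = 0 := rfl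
    have hE023 : (![(1:ℝ),(0:ℝ),(0:ℝ),(0:ℝ),(0:ℝ),(1:ℝ)]) 3 = 0 := rfl
    have hE024 : (![(1:ℝ),(0:ℝ),(0:ℝ),(0:ℝ),(0:ℝ),(1:ℝ)]) 4 = 0 := rfl
    have hE025 : (![(1:ℝ),(0:ℝ),(0:ℝ),(0:ℝ),(0:ℝ),(1:ℝ)]) 5 = 1 := rfl
    simp only [hexp] at h
    simp only [realChoi, map_add, map_sub, map_mul, map_pow, map_ofNat, eval_X,
      hE020, hE021, hE022, hE023, hE024, hE025] at h
    norm_num at h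
    all_goals rw [← h]
    all_goals exact Finset.sum_congr rfl fun i _ => by ring
  have hz10 : ∀ i, a i 1 0 = 0 := by
    intro i
    have h0 := (Finset.sum_eq_zero_iff_of_nonneg (fun j _ => sq_nonneg _)).mp E10 i (mem_univ i)
    exact (pow_eq_zero_iff (two_ne_zero (α := ℕ))).mp h0
  have hz21 : ∀ i, a i 2 1 = 0 := by
    intro i
    have h0 := (Finset.sum_eq_zero_iff_of_nonneg (fun j _ => sq_nonneg _)).mp E21 i (mem_univ i)
    exact (pow_eq_zero_iff (two_ne_zero (α := ℕ))).mp h0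
  have hz02 : ∀ i, a i 0 2 = 0 := by
    intro i
    have h0 := (Finset.sum_eq_zero_iff_of_nonneg (fun j _ => sq_nonneg _)).mp E02 i (mem_univ i)
    exact (pow_eq_zero_iff (two_ne_zero (α := ℕ))).mp h0
  have E00 : ∑ i, (a i 0 0)^2 = (1:ℝ) := by
    have h := hEv ![(1:ℝ),(0:ℝ),(0:ℝ),(1:ℝ),(0:ℝ),(0:ℝ)]
    have hE000 : (![(1:ℝ),(0:ℝ),(0:ℝ),(1:ℝ),(0:ℝ),(0:ℝ)]) 0 = 1 := rfl
    have hE001 : (![(1:ℝ),(0:ℝ),(0:ℝ),(1:ℝ),(0:ℝ),(0:ℝ)]) 1 = 0 := rfl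
    have hE002 : (![(1:ℝ),(0:ℝ),(0:ℝ),(1:ℝ),(0:ℝ),(0:ℝ)]) 2 = 0 := rfl
    have hE003 : (![(1:ℝ),(0:ℝ),(0:ℝ),(1:ℝ),(0:ℝ),(0:ℝ)]) 3 = 1 := rfl
    have hE004 : (![(1:ℝ),(0:ℝ),(0:ℝ),(1:ℝ),(0:ℝ),(0:ℝ)]) 4 = 0 := rfl
    have hE005 : (![(1:ℝ),(0:ℝ),(0:ℝ),(1:ℝ),(0:ℝ),(0:ℝ)]) 5 = 0 := rfl
    simp only [hexp] at h
    simp only [realChoi, map_add, map_sub, map_mul, map_pow, map_ofNat, eval_X,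
      hE000, hE001, hE002, hE003, hE004, hE005] at h
    norm_num at h
    all_goals rw [← h]
    all_goals exact Finset.sum_congr rfl fun i _ => by ring
  have E11 : ∑ i, (a i 1 1)^2 = (1:ℝ) := by
    have h := hEv ![(0:ℝ),(1:ℝ),(0:ℝ),(0:ℝ),(1:ℝ),(0:ℝ)]
    have hE110 : (![(0:ℝ),(1:ℝ),(0:ℝ),(0:ℝ),(1:ℝ),(0:ℝ)]) 0 = 0 := rfl
    have hE111 : (![(0:ℝ),(1:ℝ),(0:ℝ),(0:ℝ),(1:ℝ),(0:ℝ)]) 1 = 1 := rfl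
    have hE112 : (![(0:ℝ),(1:ℝ),(0:ℝ),(0:ℝ),(1:ℝ),(0:ℝ)]) 2 = 0 := rfl
    have hE113 : (![(0:ℝ),(1:ℝ),(0:ℝ),(0:ℝ),(1:ℝ),(0:ℝ)]) 3 = 0 := rfl
    have hE114 : (![(0:ℝ),(1:ℝ),(0:ℝ),(0:ℝ),(1:ℝ),(0:ℝ)]) 4 = 1 := rfl
    have hE115 : (![(0:ℝ),(1:ℝ),(0:ℝ),(0:ℝ),(1:ℝ),(0:ℝ)]) 5 = 0 := rfl
    simp only [hexp] at h
    simp only [realChoi, map_add, map_sub, map_mul, map_pow, map_ofNat, eval_X,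
      hE110, hE111, hE112, hE113, hE114, hE115] at h
    norm_num at h
    all_goals rw [← h]
    all_goals exact Finset.sum_congr rfl fun i _ => by ring
  have E22 : ∑ i, (a i 2 2)^2 = (1:ℝ) := by
    have h := hEv ![(0:ℝ),(0:ℝ),(1:ℝ),(0:ℝ),(0:ℝ),(1:ℝ)]
    have hE220 : (![(0:ℝ),(0:ℝ),(1:ℝ),(0:ℝ),(0:ℝ),(1:ℝ)]) 0 = 0 := rfl
    have hE221 : (![(0:ℝ),(0:ℝ),(1:ℝ),(0:ℝ),(0:ℝ),(1:ℝ)]) 1 = 0 := rfl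
    have hE222 : (![(0:ℝ),(0:ℝ),(1:ℝ),(0:ℝ),(0:ℝ),(1:ℝ)]) 2 = 1 := rfl
    have hE223 : (![(0:ℝ),(0:ℝ),(1:ℝ),(0:ℝ),(0:ℝ),(1:ℝ)]) 3 = 0 := rfl
    have hE224 : (![(0:ℝ),(0:ℝ),(1:ℝ),(0:ℝ),(0:ℝ),(1:ℝ)]) 4 = 0 := rfl
    have hE225 : (![(0:ℝ),(0:ℝ),(1:ℝ),(0:ℝ),(0:ℝ),(1:ℝ)]) 5 = 1 := rfl
    simp only [hexp] at h
    simp only [realChoi, map_add, map_sub, map_mul, map_pow, map_ofNat, eval_X,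
      hE220, hE221, hE222, hE223, hE224, hE225] at h
    norm_num at h
    all_goals rw [← h]
    all_goals exact Finset.sum_congr rfl fun i _ => by ring
  have E01 : ∑ i, (a i 0 1)^2 = (2:ℝ) := by
    have h := hEv ![(1:ℝ),(0:ℝ),(0:ℝ),(0:ℝ),(1:ℝ),(0:ℝ)]
    have hE010 : (![(1:ℝ),(0:ℝ),(0:ℝ),(0:ℝ),(1:ℝ),(0:ℝ)]) 0 = 1 := rfl
    have hE011 : (![(1:ℝ),(0:ℝ),(0:ℝ),(0:ℝ),(1:ℝ),(0:ℝ)]) 1 = 0 := rfl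
    have hE012 : (![(1:ℝ),(0:ℝ),(0:ℝ),(0:ℝ),(1:ℝ),(0:ℝ)]) 2 = 0 := rfl
    have hE013 : (![(1:ℝ),(0:ℝ),(0:ℝ),(0:ℝ),(1:ℝ),(0:ℝ)]) 3 = 0 := rfl
    have hE014 : (![(1:ℝ),(0:ℝ),(0:ℝ),(0:ℝ),(1:ℝ),(0:ℝ)]) 4 = 1 := rfl
    have hE015 : (![(1:ℝ),(0:ℝ),(0:ℝ),(0:ℝ),(1:ℝ),(0:ℝ)]) 5 = 0 := rfl
    simp only [hexp] at h
    simp only [realChoi, map_add, map_sub, map_mul, map_pow, map_ofNat, eval_X,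
      hE010, hE011, hE012, hE013, hE014, hE015] at h
    norm_num at h
    all_goals rw [← h]
    all_goals exact Finset.sum_congr rfl fun i _ => by ring
  have E12 : ∑ i, (a i 1 2)^2 = (2:ℝ) := by
    have h := hEv ![(0:ℝ),(1:ℝ),(0:ℝ),(0:ℝ),(0:ℝ),(1:ℝ)]
    have hE120 : (![(0:ℝ),(1:ℝ),(0:ℝ),(0:ℝ),(0:ℝ),(1:ℝ)]) 0 = 0 := rfl
    have hE121 : (![(0:ℝ),(1:ℝ),(0:ℝ),(0:ℝ),(0:ℝ),(1:ℝ)]) 1 = 1 := rfl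
    have hE122 : (![(0:ℝ),(1:ℝ),(0:ℝ),(0:ℝ),(0:ℝ),(1:ℝ)]) 2 = 0 := rfl
    have hE123 : (![(0:ℝ),(1:ℝ),(0:ℝ),(0:ℝ),(0:ℝ),(1:ℝ)]) 3 = 0 := rfl
    have hE124 : (![(0:ℝ),(1:ℝ),(0:ℝ),(0:ℝ),(0:ℝ),(1:ℝ)]) 4 = 0 := rfl
    have hE125 : (![(0:ℝ),(1:ℝ),(0:ℝ),(0:ℝ),(0:ℝ),(1:ℝ)]) 5 = 1 := rfl
    simp only [hexp] at h
    simp only [realChoi, map_add, map_sub, map_mul, map_pow, map_ofNat, eval_X,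
      hE120, hE121, hE122, hE123, hE124, hE125] at h
    norm_num at h
    all_goals rw [← h]
    all_goals exact Finset.sum_congr rfl fun i _ => by ring
  have E20 : ∑ i, (a i 2 0)^2 = (2:ℝ) := by
    have h := hEv ![(0:ℝ),(0:ℝ),(1:ℝ),(1:ℝ),(0:ℝ),(0:ℝ)]
    have hE200 : (![(0:ℝ),(0:ℝ),(1:ℝ),(1:ℝ),(0:ℝ),(0:ℝ)]) 0 = 0 := rfl
    have hE201 : (![(0:ℝ),(0:ℝ),(1:ℝ),(1:ℝ),(0:ℝ),(0:ℝ)]) 1 = 0 := rfl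
    have hE202 : (![(0:ℝ),(0:ℝ),(1:ℝ),(1:ℝ),(0:ℝ),(0:ℝ)]) 2 = 1 := rfl
    have hE203 : (![(0:ℝ),(0:ℝ),(1:ℝ),(1:ℝ),(0:ℝ),(0:ℝ)]) 3 = 1 := rfl
    have hE204 : (![(0:ℝ),(0:ℝ),(1:ℝ),(1:ℝ),(0:ℝ),(0:ℝ)]) 4 = 0 := rfl
    have hE205 : (![(0:ℝ),(0:ℝ),(1:ℝ),(1:ℝ),(0:ℝ),(0:ℝ)]) 5 = 0 := rfl
    simp only [hexp] at h
    simp only [realChoi, map_add, map_sub, map_mul, map_pow, map_ofNat, eval_X,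
      hE200, hE201, hE202, hE203, hE204, hE205] at h
    norm_num at h
    all_goals rw [← h]
    all_goals exact Finset.sum_congr rfl fun i _ => by ring
  have F01pp : ∑ i, (a i 0 0 + (1:ℝ) * a i 0 1 + (1:ℝ) * a i 1 1)^2 = (2:ℝ) := by
    have h := hEv ![(1:ℝ),(1:ℝ),(0:ℝ),(1:ℝ),(1:ℝ),(0:ℝ)]
    have hF01pp0 : (![(1:ℝ),(1:ℝ),(0:ℝ),(1:ℝ),(1:ℝ),(0:ℝ)]) 0 = 1 := rfl
    have hF01pp1 : (![(1:ℝ),(1:ℝ),(0:ℝ),(1:ℝ),(1:ℝ),(0:ℝ)]) 1 = 1 := rfl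
    have hF01pp2 : (![(1:ℝ),(1:ℝ),(0:ℝ),(1:ℝ),(1:ℝ),(0:ℝ)]) 2 = 0 := rfl
    have hF01pp3 : (![(1:ℝ),(1:ℝ),(0:ℝ),(1:ℝ),(1:ℝ),(0:ℝ)]) 3 = 1 := rfl
    have hF01pp4 : (![(1:ℝ),(1:ℝ),(0:ℝ),(1:ℝ),(1:ℝ),(0:ℝ)]) 4 = 1 := rfl
    have hF01pp5 : (![(1:ℝ),(1:ℝ),(0:ℝ),(1:ℝ),(1:ℝ),(0:ℝ)]) 5 = 0 := rfl
    simp only [hexp] at h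
    simp only [realChoi, map_add, map_sub, map_mul, map_pow, map_ofNat, eval_X,
      hF01pp0, hF01pp1, hF01pp2, hF01pp3, hF01pp4, hF01pp5] at h
    norm_num at h
    all_goals rw [← h]
    all_goals exact Finset.sum_congr rfl fun i _ => by rw [hz10 i]; ring
  have F12pp : ∑ i, (a i 1 1 + (1:ℝ) * a i 1 2 + (1:ℝ) * a i 2 2)^2 = (2:ℝ) := by
    have h := hEv ![(0:ℝ),(1:ℝ),(1:ℝ),(0:ℝ),(1:ℝ),(1:ℝ)]
    have hF12pp0 : (![(0:ℝ),(1:ℝ),(1:ℝ),(0:ℝ),(1:ℝ),(1:ℝ)]) 0 = 0 := rfl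
    have hF12pp1 : (![(0:ℝ),(1:ℝ),(1:ℝ),(0:ℝ),(1:ℝ),(1:ℝ)]) 1 = 1 := rfl
    have hF12pp2 : (![(0:ℝ),(1:ℝ),(1:ℝ),(0:ℝ),(1:ℝ),(1:ℝ)]) 2 = 1 := rfl
    have hF12pp3 : (![(0:ℝ),(1:ℝ),(1:ℝ),(0:ℝ),(1:ℝ),(1:ℝ)]) 3 = 0 := rfl
    have hF12pp4 : (![(0:ℝ),(1:ℝ),(1:ℝ),(0:ℝ),(1:ℝ),(1:ℝ)]) 4 = 1 := rfl
    have hF12pp5 : (![(0:ℝ),(1:ℝ),(1:ℝ),(0:ℝ),(1:ℝ),(1:ℝ)]) 5 = 1 := rfl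
    simp only [hexp] at h
    simp only [realChoi, map_add, map_sub, map_mul, map_pow, map_ofNat, eval_X,
      hF12pp0, hF12pp1, hF12pp2, hF12pp3, hF12pp4, hF12pp5] at h
    norm_num at h
    all_goals rw [← h]
    all_goals exact Finset.sum_congr rfl fun i _ => by rw [hz21 i]; ring
  have F02pp : ∑ i, (a i 0 0 + (1:ℝ) * a i 2 0 + (1:ℝ) * a i 2 2)^2 = (2:ℝ) := by
    have h := hEv ![(1:ℝ),(0:ℝ),(1:ℝ),(1:ℝ),(0:ℝ),(1:ℝ)]
    have hF02pp0 : (![(1:ℝ),(0:ℝ),(1:ℝ),(1:ℝ),(0:ℝ),(1:ℝ)]) 0 = 1 := rfl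
    have hF02pp1 : (![(1:ℝ),(0:ℝ),(1:ℝ),(1:ℝ),(0:ℝ),(1:ℝ)]) 1 = 0 := rfl
    have hF02pp2 : (![(1:ℝ),(0:ℝ),(1:ℝ),(1:ℝ),(0:ℝ),(1:ℝ)]) 2 = 1 := rfl
    have hF02pp3 : (![(1:ℝ),(0:ℝ),(1:ℝ),(1:ℝ),(0:ℝ),(1:ℝ)]) 3 = 1 := rfl
    have hF02pp4 : (![(1:ℝ),(0:ℝ),(1:ℝ),(1:ℝ),(0:ℝ),(1:ℝ)]) 4 = 0 := rfl
    have hF02pp5 : (![(1:ℝ),(0:ℝ),(1:ℝ),(1:ℝ),(0:ℝ),(1:ℝ)]) 5 = 1 := rfl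
    simp only [hexp] at h
    simp only [realChoi, map_add, map_sub, map_mul, map_pow, map_ofNat, eval_X,
      hF02pp0, hF02pp1, hF02pp2, hF02pp3, hF02pp4, hF02pp5] at h
    norm_num at h
    all_goals rw [← h]
    all_goals exact Finset.sum_congr rfl fun i _ => by rw [hz02 i]; ring
  have F01pm : ∑ i, (a i 0 0 + (-1:ℝ) * a i 0 1 + (-1:ℝ) * a i 1 1)^2 = (6:ℝ) := by
    have h := hEv ![(1:ℝ),(1:ℝ),(0:ℝ),(1:ℝ),(-1:ℝ),(0:ℝ)]
    have hF01pm0 : (![(1:ℝ),(1:ℝ),(0:ℝ),(1:ℝ),(-1:ℝ),(0:ℝ)]) 0 = 1 := rfl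
    have hF01pm1 : (![(1:ℝ),(1:ℝ),(0:ℝ),(1:ℝ),(-1:ℝ),(0:ℝ)]) 1 = 1 := rfl
    have hF01pm2 : (![(1:ℝ),(1:ℝ),(0:ℝ),(1:ℝ),(-1:ℝ),(0:ℝ)]) 2 = 0 := rfl
    have hF01pm3 : (![(1:ℝ),(1:ℝ),(0:ℝ),(1:ℝ),(-1:ℝ),(0:ℝ)]) 3 = 1 := rfl
    have hF01pm4 : (![(1:ℝ),(1:ℝ),(0:ℝ),(1:ℝ),(-1:ℝ),(0:ℝ)]) 4 = -1 := rfl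
    have hF01pm5 : (![(1:ℝ),(1:ℝ),(0:ℝ),(1:ℝ),(-1:ℝ),(0:ℝ)]) 5 = 0 := rfl
    simp only [hexp] at h
    simp only [realChoi, map_add, map_sub, map_mul, map_pow, map_ofNat, eval_X,
      hF01pm0, hF01pm1, hF01pm2, hF01pm3, hF01pm4, hF01pm5] at h
    norm_num at h
    all_goals rw [← h]
    all_goals exact Finset.sum_congr rfl fun i _ => by rw [hz10 i]; ring
  have F12pm : ∑ i, (a i 1 1 + (-1:ℝ) * a i 1 2 + (-1:ℝ) * a i 2 2)^2 = (6:ℝ) := by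
    have h := hEv ![(0:ℝ),(1:ℝ),(1:ℝ),(0:ℝ),(1:ℝ),(-1:ℝ)]
    have hF12pm0 : (![(0:ℝ),(1:ℝ),(1:ℝ),(0:ℝ),(1:ℝ),(-1:ℝ)]) 0 = 0 := rfl
    have hF12pm1 : (![(0:ℝ),(1:ℝ),(1:ℝ),(0:ℝ),(1:ℝ),(-1:ℝ)]) 1 = 1 := rfl
    have hF12pm2 : (![(0:ℝ),(1:ℝ),(1:ℝ),(0:ℝ),(1:ℝ),(-1:ℝ)]) 2 = 1 := rfl
    have hF12pm3 : (![(0:ℝ),(1:ℝ),(1:ℝ),(0:ℝ),(1:ℝ),(-1:ℝ)]) 3 = 0 := rfl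
    have hF12pm4 : (![(0:ℝ),(1:ℝ),(1:ℝ),(0:ℝ),(1:ℝ),(-1:ℝ)]) 4 = 1 := rfl
    have hF12pm5 : (![(0:ℝ),(1:ℝ),(1:ℝ),(0:ℝ),(1:ℝ),(-1:ℝ)]) 5 = -1 := rfl
    simp only [hexp] at h
    simp only [realChoi, map_add, map_sub, map_mul, map_pow, map_ofNat, eval_X,
      hF12pm0, hF12pm1, hF12pm2, hF12pm3, hF12pm4, hF12pm5] at h
    norm_num at h
    all_goals rw [← h]
    all_goals exact Finset.sum_congr rfl fun i _ => by rw [hz21 i]; ring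
  have F02pm : ∑ i, (a i 0 0 + (1:ℝ) * a i 2 0 + (-1:ℝ) * a i 2 2)^2 = (6:ℝ) := by
    have h := hEv ![(1:ℝ),(0:ℝ),(1:ℝ),(1:ℝ),(0:ℝ),(-1:ℝ)]
    have hF02pm0 : (![(1:ℝ),(0:ℝ),(1:ℝ),(1:ℝ),(0:ℝ),(-1:ℝ)]) 0 = 1 := rfl
    have hF02pm1 : (![(1:ℝ),(0:ℝ),(1:ℝ),(1:ℝ),(0:ℝ),(-1:ℝ)]) 1 = 0 := rfl
    have hF02pm2 : (![(1:ℝ),(0:ℝ),(1:ℝ),(1:ℝ),(0:ℝ),(-1:ℝ)]) 2 = 1 := rfl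
    have hF02pm3 : (![(1:ℝ),(0:ℝ),(1:ℝ),(1:ℝ),(0:ℝ),(-1:ℝ)]) 3 = 1 := rfl
    have hF02pm4 : (![(1:ℝ),(0:ℝ),(1:ℝ),(1:ℝ),(0:ℝ),(-1:ℝ)]) 4 = 0 := rfl
    have hF02pm5 : (![(1:ℝ),(0:ℝ),(1:ℝ),(1:ℝ),(0:ℝ),(-1:ℝ)]) 5 = -1 := rfl
    simp only [hexp] at h
    simp only [realChoi, map_add, map_sub, map_mul, map_pow, map_ofNat, eval_X,
      hF02pm0, hF02pm1, hF02pm2, hF02pm3, hF02pm4, hF02pm5] at h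
    norm_num at h
    all_goals rw [← h]
    all_goals exact Finset.sum_congr rfl fun i _ => by rw [hz02 i]; ring
  have F01mp : ∑ i, (a i 0 0 + (1:ℝ) * a i 0 1 + (-1:ℝ) * a i 1 1)^2 = (6:ℝ) := by
    have h := hEv ![(1:ℝ),(-1:ℝ),(0:ℝ),(1:ℝ),(1:ℝ),(0:ℝ)]
    have hF01mp0 : (![(1:ℝ),(-1:ℝ),(0:ℝ),(1:ℝ),(1:ℝ),(0:ℝ)]) 0 = 1 := rfl
    have hF01mp1 : (![(1:ℝ),(-1:ℝ),(0:ℝ),(1:ℝ),(1:ℝ),(0:ℝ)]) 1 = -1 := rfl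
    have hF01mp2 : (![(1:ℝ),(-1:ℝ),(0:ℝ),(1:ℝ),(1:ℝ),(0:ℝ)]) 2 = 0 := rfl
    have hF01mp3 : (![(1:ℝ),(-1:ℝ),(0:ℝ),(1:ℝ),(1:ℝ),(0:ℝ)]) 3 = 1 := rfl
    have hF01mp4 : (![(1:ℝ),(-1:ℝ),(0:ℝ),(1:ℝ),(1:ℝ),(0:ℝ)]) 4 = 1 := rfl
    have hF01mp5 : (![(1:ℝ),(-1:ℝ),(0:ℝ),(1:ℝ),(1:ℝ),(0:ℝ)]) 5 = 0 := rfl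
    simp only [hexp] at h
    simp only [realChoi, map_add, map_sub, map_mul, map_pow, map_ofNat, eval_X,
      hF01mp0, hF01mp1, hF01mp2, hF01mp3, hF01mp4, hF01mp5] at h
    norm_num at h
    all_goals rw [← h]
    all_goals exact Finset.sum_congr rfl fun i _ => by rw [hz10 i]; ring
  have F12mp : ∑ i, (a i 1 1 + (1:ℝ) * a i 1 2 + (-1:ℝ) * a i 2 2)^2 = (6:ℝ) := by
    have h := hEv ![(0:ℝ),(1:ℝ),(-1:ℝ),(0:ℝ),(1:ℝ),(1:ℝ)]
    have hF12mp0 : (![(0:ℝ),(1:ℝ),(-1:ℝ),(0:ℝ),(1:ℝ),(1:ℝ)]) 0 = 0 := rfl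
    have hF12mp1 : (![(0:ℝ),(1:ℝ),(-1:ℝ),(0:ℝ),(1:ℝ),(1:ℝ)]) 1 = 1 := rfl
    have hF12mp2 : (![(0:ℝ),(1:ℝ),(-1:ℝ),(0:ℝ),(1:ℝ),(1:ℝ)]) 2 = -1 := rfl
    have hF12mp3 : (![(0:ℝ),(1:ℝ),(-1:ℝ),(0:ℝ),(1:ℝ),(1:ℝ)]) 3 = 0 := rfl
    have hF12mp4 : (![(0:ℝ),(1:ℝ),(-1:ℝ),(0:ℝ),(1:ℝ),(1:ℝ)]) 4 = 1 := rfl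
    have hF12mp5 : (![(0:ℝ),(1:ℝ),(-1:ℝ),(0:ℝ),(1:ℝ),(1:ℝ)]) 5 = 1 := rfl
    simp only [hexp] at h
    simp only [realChoi, map_add, map_sub, map_mul, map_pow, map_ofNat, eval_X,
      hF12mp0, hF12mp1, hF12mp2, hF12mp3, hF12mp4, hF12mp5] at h
    norm_num at h
    all_goals rw [← h]
    all_goals exact Finset.sum_congr rfl fun i _ => by rw [hz21 i]; ring
  have F02mp : ∑ i, (a i 0 0 + (-1:ℝ) * a i 2 0 + (-1:ℝ) * a i 2 2)^2 = (6:ℝ) := by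
    have h := hEv ![(1:ℝ),(0:ℝ),(-1:ℝ),(1:ℝ),(0:ℝ),(1:ℝ)]
    have hF02mp0 : (![(1:ℝ),(0:ℝ),(-1:ℝ),(1:ℝ),(0:ℝ),(1:ℝ)]) 0 = 1 := rfl
    have hF02mp1 : (![(1:ℝ),(0:ℝ),(-1:ℝ),(1:ℝ),(0:ℝ),(1:ℝ)]) 1 = 0 := rfl
    have hF02mp2 : (![(1:ℝ),(0:ℝ),(-1:ℝ),(1:ℝ),(0:ℝ),(1:ℝ)]) 2 = -1 := rfl
    have hF02mp3 : (![(1:ℝ),(0:ℝ),(-1:ℝ),(1:ℝ),(0:ℝ),(1:ℝ)]) 3 = 1 := rfl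
    have hF02mp4 : (![(1:ℝ),(0:ℝ),(-1:ℝ),(1:ℝ),(0:ℝ),(1:ℝ)]) 4 = 0 := rfl
    have hF02mp5 : (![(1:ℝ),(0:ℝ),(-1:ℝ),(1:ℝ),(0:ℝ),(1:ℝ)]) 5 = 1 := rfl
    simp only [hexp] at h
    simp only [realChoi, map_add, map_sub, map_mul, map_pow, map_ofNat, eval_X,
      hF02mp0, hF02mp1, hF02mp2, hF02mp3, hF02mp4, hF02mp5] at h
    norm_num at h
    all_goals rw [← h]
    all_goals exact Finset.sum_congr rfl fun i _ => by rw [hz02 i]; ring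
  have F01mm : ∑ i, (a i 0 0 + (-1:ℝ) * a i 0 1 + (1:ℝ) * a i 1 1)^2 = (2:ℝ) := by
    have h := hEv ![(1:ℝ),(-1:ℝ),(0:ℝ),(1:ℝ),(-1:ℝ),(0:ℝ)]
    have hF01mm0 : (![(1:ℝ),(-1:ℝ),(0:ℝ),(1:ℝ),(-1:ℝ),(0:ℝ)]) 0 = 1 := rfl
    have hF01mm1 : (![(1:ℝ),(-1:ℝ),(0:ℝ),(1:ℝ),(-1:ℝ),(0:ℝ)]) 1 = -1 := rfl
    have hF01mm2 : (![(1:ℝ),(-1:ℝ),(0:ℝ),(1:ℝ),(-1:ℝ),(0:ℝ)]) 2 = 0 := rfl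
    have hF01mm3 : (![(1:ℝ),(-1:ℝ),(0:ℝ),(1:ℝ),(-1:ℝ),(0:ℝ)]) 3 = 1 := rfl
    have hF01mm4 : (![(1:ℝ),(-1:ℝ),(0:ℝ),(1:ℝ),(-1:ℝ),(0:ℝ)]) 4 = -1 := rfl
    have hF01mm5 : (![(1:ℝ),(-1:ℝ),(0:ℝ),(1:ℝ),(-1:ℝ),(0:ℝ)]) 5 = 0 := rfl
    simp only [hexp] at h
    simp only [realChoi, map_add, map_sub, map_mul, map_pow, map_ofNat, eval_X,
      hF01mm0, hF01mm1, hF01mm2, hF01mm3, hF01mm4, hF01mm5] at h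
    norm_num at h
    all_goals rw [← h]
    all_goals exact Finset.sum_congr rfl fun i _ => by rw [hz10 i]; ring
  have F12mm : ∑ i, (a i 1 1 + (-1:ℝ) * a i 1 2 + (1:ℝ) * a i 2 2)^2 = (2:ℝ) := by
    have h := hEv ![(0:ℝ),(1:ℝ),(-1:ℝ),(0:ℝ),(1:ℝ),(-1:ℝ)]
    have hF12mm0 : (![(0:ℝ),(1:ℝ),(-1:ℝ),(0:ℝ),(1:ℝ),(-1:ℝ)]) 0 = 0 := rfl
    have hF12mm1 : (![(0:ℝ),(1:ℝ),(-1:ℝ),(0:ℝ),(1:ℝ),(-1:ℝ)]) 1 = 1 := rfl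
    have hF12mm2 : (![(0:ℝ),(1:ℝ),(-1:ℝ),(0:ℝ),(1:ℝ),(-1:ℝ)]) 2 = -1 := rfl
    have hF12mm3 : (![(0:ℝ),(1:ℝ),(-1:ℝ),(0:ℝ),(1:ℝ),(-1:ℝ)]) 3 = 0 := rfl
    have hF12mm4 : (![(0:ℝ),(1:ℝ),(-1:ℝ),(0:ℝ),(1:ℝ),(-1:ℝ)]) 4 = 1 := rfl
    have hF12mm5 : (![(0:ℝ),(1:ℝ),(-1:ℝ),(0:ℝ),(1:ℝ),(-1:ℝ)]) 5 = -1 := rfl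
    simp only [hexp] at h
    simp only [realChoi, map_add, map_sub, map_mul, map_pow, map_ofNat, eval_X,
      hF12mm0, hF12mm1, hF12mm2, hF12mm3, hF12mm4, hF12mm5] at h
    norm_num at h
    all_goals rw [← h]
    all_goals exact Finset.sum_congr rfl fun i _ => by rw [hz21 i]; ring
  have F02mm : ∑ i, (a i 0 0 + (-1:ℝ) * a i 2 0 + (1:ℝ) * a i 2 2)^2 = (2:ℝ) := by
    have h := hEv ![(1:ℝ),(0:ℝ),(-1:ℝ),(1:ℝ),(0:ℝ),(-1:ℝ)]
    have hF02mm0 : (![(1:ℝ),(0:ℝ),(-1:ℝ),(1:ℝ),(0:ℝ),(-1:ℝ)]) 0 = 1 := rfl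
    have hF02mm1 : (![(1:ℝ),(0:ℝ),(-1:ℝ),(1:ℝ),(0:ℝ),(-1:ℝ)]) 1 = 0 := rfl
    have hF02mm2 : (![(1:ℝ),(0:ℝ),(-1:ℝ),(1:ℝ),(0:ℝ),(-1:ℝ)]) 2 = -1 := rfl
    have hF02mm3 : (![(1:ℝ),(0:ℝ),(-1:ℝ),(1:ℝ),(0:ℝ),(-1:ℝ)]) 3 = 1 := rfl
    have hF02mm4 : (![(1:ℝ),(0:ℝ),(-1:ℝ),(1:ℝ),(0:ℝ),(-1:ℝ)]) 4 = 0 := rfl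
    have hF02mm5 : (![(1:ℝ),(0:ℝ),(-1:ℝ),(1:ℝ),(0:ℝ),(-1:ℝ)]) 5 = -1 := rfl
    simp only [hexp] at h
    simp only [realChoi, map_add, map_sub, map_mul, map_pow, map_ofNat, eval_X,
      hF02mm0, hF02mm1, hF02mm2, hF02mm3, hF02mm4, hF02mm5] at h
    norm_num at h
    all_goals rw [← h]
    all_goals exact Finset.sum_congr rfl fun i _ => by rw [hz02 i]; ring
  have key : (0:ℝ) ≤ ∑ i, (a i 0 0 + (1:ℝ) * a i 1 1 + (1:ℝ) * a i 2 2)^2 :=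
    Finset.sum_nonneg fun i _ => sq_nonneg _
  rw [sum_sq3] at key F01pp F01pm F01mp F01mm F12pp F12pm F12mp F12mm F02pp F02pm F02mp F02mm
  norm_num at key F01pp F01pm F01mp F01mm F12pp F12pm F12mp F12mm F02pp F02pm F02mp F02mm
  linarith [key, E00, E11, E22, E01, E12, E20,
    F01pp, F01pm, F01mp, F01mm, F12pp, F12pm, F12mp, F12mm, F02pp, F02pm, F02mp, F02mm]
end

section
/- Let $p$ be a Hermitian polynomial in $z \in \mathbb{C}^n$ and let $P(a,b) = p(a + ib)$ be the associated real polynomial in $2n$ real variables. Then $p$ is a sum of squares of Hermitian polynomials if and only if $P$ is a sum of squares of real polynomials. -/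
open MvPolynomial Complex

/-- Variables: `(i, false)` is `zᵢ`, `(i, true)` its conjugate `z̄ᵢ`. -/
abbrev CVar (n : ℕ) := Fin n × Bool

/-- Evaluation of a polynomial in `z, z̄` at `z ∈ ℂⁿ` (conjugate variables evaluated at
conjugates). -/
noncomputable def evalC {n : ℕ} (q : MvPolynomial (CVar n) ℂ) (z : Fin n → ℂ) : ℂ :=
  eval (fun v => if v.2 then starRingEnd ℂ (z v.1) else z v.1) q

/-- A Hermitian polynomial: one taking only real values on `ℂⁿ`. -/
def IsHermitianPolyC {n : ℕ} (q : MvPolynomial (CVar n) ℂ) : Prop :=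
  ∀ z : Fin n → ℂ, (evalC q z).im = 0

section Aux

variable {σ : Type*}

lemma eval_bind1 {τ R : Type*} [CommSemiring R] (g : σ → MvPolynomial τ R) (x : τ → R)
    (q : MvPolynomial σ R) :
    eval x (bind₁ g q) = eval (fun v => eval x (g v)) q := by
  have := aeval_bind₁ (R := R) (S := R) x g q
  simpa [aeval_def, eval₂_id] using this

lemma eval_congr {R : Type*} [CommSemiring R] {x y : σ → R} (h : ∀ s, x s = y s)
    (p : MvPolynomial σ R) : eval x p = eval y p := by
  rw [show x = y from funext h]

/-- The real-part polynomial. -/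
noncomputable def reP (f : MvPolynomial σ ℂ) : MvPolynomial σ ℝ :=
  ∑ m ∈ f.support, monomial m (f.coeff m).re

/-- The imaginary-part polynomial. -/
noncomputable def imP (f : MvPolynomial σ ℂ) : MvPolynomial σ ℝ :=
  ∑ m ∈ f.support, monomial m (f.coeff m).im

lemma coeff_reP (f : MvPolynomial σ ℂ) (m : σ →₀ ℕ) : coeff m (reP f) = (coeff m f).re := by
  classical
  rw [reP, coeff_sum]
  simp only [coeff_monomial]
  rw [Finset.sum_ite_eq' f.support m (fun x => (coeff x f).re)]
  by_cases h : m ∈ f.support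
  · simp [h]
  · simp [h, (notMem_support_iff.mp h)]

lemma coeff_imP (f : MvPolynomial σ ℂ) (m : σ →₀ ℕ) : coeff m (imP f) = (coeff m f).im := by
  classical
  rw [imP, coeff_sum]
  simp only [coeff_monomial]
  rw [Finset.sum_ite_eq' f.support m (fun x => (coeff x f).im)]
  by_cases h : m ∈ f.support
  · simp [h]
  · simp [h, (notMem_support_iff.mp h)]

lemma reP_add_imP (f : MvPolynomial σ ℂ) :
    map ofRealHom (reP f) + C I * map ofRealHom (imP f) = f := by
  ext m
  simp only [coeff_add, coeff_map, coeff_C_mul, coeff_reP, coeff_imP, ofRealHom_eq_coe]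
  rw [mul_comm]
  exact Complex.re_add_im _

lemma eval_map_ofReal (g : MvPolynomial σ ℝ) (x : σ → ℝ) :
    eval (fun s => (x s : ℂ)) (map ofRealHom g) = ((eval x g : ℝ) : ℂ) := by
  rw [eval_map]
  have := eval₂_comp_left ofRealHom (RingHom.id ℝ) x g
  simp only [eval₂_id, RingHom.comp_id] at this
  exact this.symm

lemma eq_zero_of_real_eval (f : MvPolynomial σ ℂ)
    (h : ∀ x : σ → ℝ, eval (fun s => (x s : ℂ)) f = 0) : f = 0 := by
  have key : ∀ x : σ → ℝ, eval x (reP f) = 0 ∧ eval x (imP f) = 0 := by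
    intro x
    have h2 := h x
    rw [← reP_add_imP f] at h2
    simp only [map_add, map_mul, eval_C, eval_map_ofReal] at h2
    have hre := congrArg Complex.re h2
    have him := congrArg Complex.im h2
    simp at hre him
    exact ⟨hre, him⟩
  have hr : reP f = 0 := MvPolynomial.funext fun x => by simp [(key x).1]
  have hi : imP f = 0 := MvPolynomial.funext fun x => by simp [(key x).2]
  rw [← reP_add_imP f, hr, hi]
  simp

lemma eq_map_reP (f : MvPolynomial σ ℂ)
    (h : ∀ x : σ → ℝ, (eval (fun s => (x s : ℂ)) f).im = 0) :
    f = map ofRealHom (reP f) := by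
  have hi : imP f = 0 := by
    refine MvPolynomial.funext fun x => ?_
    have h2 := congrArg Complex.im (congrArg (eval fun s => ((x s : ℝ) : ℂ)) (reP_add_imP f))
    simp only [map_add, map_mul, eval_C, eval_map_ofReal] at h2
    simp at h2
    simp [h2, h x]
  conv_lhs => rw [← reP_add_imP f, hi]
  simp

end Aux

/-- Let `p` be a Hermitian polynomial in `z ∈ ℂⁿ` and let `P` be the
associated real polynomial in the `2n` real variables `a, b`, i.e.
`P(a,b) = p(a + ib)`. Then `p` is a sum of squares of Hermitian polynomials if and only if
`P` is a sum of squares of real polynomials. (The real variables are indexed by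
`(i, false) ↦ aᵢ` and `(i, true) ↦ bᵢ`.) -/
theorem stmt_18 {n : ℕ} (p : MvPolynomial (CVar n) ℂ) (hp : IsHermitianPolyC p)
    (P : MvPolynomial (CVar n) ℝ)
    (hP : ∀ a b : Fin n → ℝ,
      ((eval (fun v => if v.2 then b v.1 else a v.1) P : ℝ) : ℂ)
        = evalC p (fun i => (a i : ℂ) + (b i : ℂ) * I)) :
    (∃ (N : ℕ) (q : Fin N → MvPolynomial (CVar n) ℂ),
      (∀ k, IsHermitianPolyC (q k)) ∧ p = ∑ k, q k ^ 2) ↔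
    (∃ (N : ℕ) (Q : Fin N → MvPolynomial (CVar n) ℝ), P = ∑ k, Q k ^ 2) := by
  classical
  -- substitution z ↦ a + I b, z̄ ↦ a - I b
  set φg : CVar n → MvPolynomial (CVar n) ℂ := fun v =>
    if v.2 then X (v.1, false) - C I * X (v.1, true)
    else X (v.1, false) + C I * X (v.1, true) with hφg
  -- inverse substitution a ↦ (z + z̄)/2, b ↦ (z - z̄)/(2I)
  set ψg : CVar n → MvPolynomial (CVar n) ℂ := fun v =>
    if v.2 then C (-(I/2)) * (X (v.1, false) - X (v.1, true))
    else C (1/2 : ℂ) * (X (v.1, false) + X (v.1, true)) with hψg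
  have psi_phi : ∀ q : MvPolynomial (CVar n) ℂ, bind₁ ψg (bind₁ φg q) = q := by
    intro q
    rw [bind₁_bind₁]
    have h2 : (C (1/2 : ℂ) : MvPolynomial (CVar n) ℂ) * 2 = 1 := by
      rw [← map_ofNat C 2, ← C_mul]
      norm_num
    have hgen : (fun i : CVar n => bind₁ ψg (φg i)) = X := by
      funext v
      obtain ⟨i, b⟩ := v
      have hCC : (C I : MvPolynomial (CVar n) ℂ)
          * (C (-(I/2)) * (X (i, false) - X (i, true)))
          = C (1/2 : ℂ) * (X (i, false) - X (i, true)) := by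
        rw [← mul_assoc, ← C_mul,
          show I * -(I/2) = (1/2 : ℂ) from by linear_combination (-1/2 : ℂ) * Complex.I_mul_I]
      cases b <;>
        simp only [hφg, hψg, if_true, if_false, map_add, map_sub, map_mul, bind₁_X_right,
          bind₁_C_right, Bool.false_eq_true] <;>
      · rw [hCC]
        ring_nf
        rw [mul_right_comm, h2, one_mul]
    rw [hgen, bind₁_X_left]
    rfl
  -- evaluation of `bind₁ φg q` at real points
  have F1 : ∀ (q : MvPolynomial (CVar n) ℂ) (a b : Fin n → ℝ),
      eval (fun v : CVar n => if v.2 then (b v.1 : ℂ) else (a v.1 : ℂ)) (bind₁ φg q)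
        = evalC q (fun i => (a i : ℂ) + (b i : ℂ) * I) := by
    intro q a b
    rw [eval_bind1, evalC]
    refine eval_congr (fun v => ?_) q
    obtain ⟨i, c⟩ := v
    cases c <;>
      simp [hφg, Complex.ext_iff]
  -- injectivity of evalC
  have evalC_inj : ∀ q q' : MvPolynomial (CVar n) ℂ, (∀ z, evalC q z = evalC q' z) → q = q' := by
    intro q q' h
    have hz : ∀ x : CVar n → ℝ, eval (fun s => (x s : ℂ)) (bind₁ φg (q - q')) = 0 := by
      intro x
      have h1 := F1 (q - q') (fun i => x (i, false)) (fun i => x (i, true))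
      have h2 : evalC (q - q') (fun i => (x (i, false) : ℂ) + (x (i, true) : ℂ) * I) = 0 := by
        have h3 := h (fun i => (x (i, false) : ℂ) + (x (i, true) : ℂ) * I)
        simp only [evalC] at h3 ⊢
        rw [map_sub, h3, sub_self]
      rw [h2] at h1
      rw [← h1]
      refine eval_congr (fun v => ?_) _
      obtain ⟨i, c⟩ := v
      cases c <;> simp
    have := eq_zero_of_real_eval _ hz
    have := congrArg (bind₁ ψg) this
    rw [psi_phi] at this
    simpa [sub_eq_zero] using this
  -- evaluation of `bind₁ ψg (map ofRealHom G)` via evalC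
  have F3 : ∀ (G : MvPolynomial (CVar n) ℝ) (z : Fin n → ℂ),
      evalC (bind₁ ψg (map ofRealHom G)) z
        = ((eval (fun v : CVar n => if v.2 then (z v.1).im else (z v.1).re) G : ℝ) : ℂ) := by
    intro G z
    rw [evalC, eval_bind1]
    have hpt : (fun v : CVar n =>
        eval (fun v : CVar n => if v.2 then starRingEnd ℂ (z v.1) else z v.1) (ψg v))
        = fun v : CVar n => (((if v.2 then (z v.1).im else (z v.1).re : ℝ)) : ℂ) := by
      funext v
      obtain ⟨i, c⟩ := v
      cases c
      · simp only [hψg, if_false, Bool.false_eq_true, map_add, map_mul, eval_C, eval_X,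
          if_true]
        rw [Complex.add_conj]
        push_cast
        ring
      · simp only [hψg, if_true, Bool.false_eq_true, if_false, map_sub, map_mul, eval_C,
          eval_X]
        rw [Complex.sub_conj]
        have : I * I = -1 := Complex.I_mul_I
        push_cast
        linear_combination (-(z i).im) * this
    rw [hpt]
    have := eval_map_ofReal G (fun v : CVar n => if v.2 then (z v.1).im else (z v.1).re)
    rw [← this]
  constructor
  · -- p sos of Hermitians → P sos
    rintro ⟨N, q, hq, hsum⟩
    set r : Fin N → MvPolynomial (CVar n) ℂ := fun k => bind₁ φg (q k) with hr
    have hreal : ∀ k, ∀ x : CVar n → ℝ, (eval (fun s => (x s : ℂ)) (r k)).im = 0 := by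
      intro k x
      have h1 := F1 (q k) (fun i => x (i, false)) (fun i => x (i, true))
      have hpt : (fun v : CVar n => if v.2 then ((x (v.1, true) : ℝ) : ℂ)
          else ((x (v.1, false) : ℝ) : ℂ)) = fun s : CVar n => (x s : ℂ) := by
        funext v
        obtain ⟨i, c⟩ := v
        cases c <;> simp
      rw [hpt] at h1
      rw [hr]
      simp only
      rw [h1]
      exact hq k _
    have hmap : ∀ k, r k = map ofRealHom (reP (r k)) := fun k => eq_map_reP _ (hreal k)
    refine ⟨N, fun k => reP (r k), ?_⟩
    have key : map ofRealHom P = map ofRealHom (∑ k, reP (r k) ^ 2) := by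
      have h1 : map ofRealHom (∑ k, reP (r k) ^ 2) = bind₁ φg p := by
        rw [hsum, map_sum, map_sum]
        congr 1
        funext k
        rw [map_pow, map_pow, ← hmap k, hr]
      have h2 : map ofRealHom P = bind₁ φg p := by
        have hz : ∀ x : CVar n → ℝ,
            eval (fun s => (x s : ℂ)) (map ofRealHom P - bind₁ φg p) = 0 := by
          intro x
          have hF := F1 p (fun i => x (i, false)) (fun i => x (i, true))
          have hpt : (fun v : CVar n => if v.2 then ((x (v.1, true) : ℝ) : ℂ)
              else ((x (v.1, false) : ℝ) : ℂ)) = fun s : CVar n => (x s : ℂ) := by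
            funext v
            obtain ⟨i, c⟩ := v
            cases c <;> simp
          rw [hpt] at hF
          have hPx := hP (fun i => x (i, false)) (fun i => x (i, true))
          have hpt2 : (fun v : CVar n => if v.2 then x (v.1, true) else x (v.1, false))
              = x := by
            funext v
            obtain ⟨i, c⟩ := v
            cases c <;> simp
          rw [hpt2] at hPx
          rw [map_sub, hF, eval_map_ofReal, hPx, sub_self]
        have := eq_zero_of_real_eval _ hz
        rwa [sub_eq_zero] at this
      rw [h1, h2]
    exact MvPolynomial.map_injective ofRealHom Complex.ofReal_injective key
  · -- P sos → p sos of Hermitians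
    rintro ⟨N, Q, hQ⟩
    set q : Fin N → MvPolynomial (CVar n) ℂ := fun k => bind₁ ψg (map ofRealHom (Q k)) with hq
    have hherm : ∀ k, IsHermitianPolyC (q k) := by
      intro k z
      rw [hq]
      simp only
      rw [F3]
      exact Complex.ofReal_im _
    refine ⟨N, q, hherm, ?_⟩
    apply evalC_inj
    intro z
    have hL : evalC p z
        = ((eval (fun v : CVar n => if v.2 then (z v.1).im else (z v.1).re) P : ℝ) : ℂ) := by
      have h1 := hP (fun i => (z i).re) (fun i => (z i).im)
      have h2 : (fun i => ((z i).re : ℂ) + ((z i).im : ℂ) * I) = z :=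
        funext fun i => Complex.re_add_im _
      rw [h2] at h1
      rw [← h1]
    have hR : evalC (∑ k, q k ^ 2) z
        = ((eval (fun v : CVar n => if v.2 then (z v.1).im else (z v.1).re) (∑ k, Q k ^ 2) : ℝ)
          : ℂ) := by
      have : (∑ k, q k ^ 2) = bind₁ ψg (map ofRealHom (∑ k, Q k ^ 2)) := by
        rw [map_sum, map_sum]
        congr 1
        funext k
        rw [map_pow, map_pow, hq]
      rw [this, F3]
    rw [hL, hR, ← hQ]
end
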